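/- arXiv:1910.12373 — 3 statements merged into one kernel-verified Lean document; each statement's English description precedes it below -/
import Mathlib

section
/- A sequence [x_k]_0^N of R^d-valued random vectors is reciprocal if and only if it is (i) [0,N]-CM_N (i.e., CM_L) and [k1,N]-CM_{k1} (i.e., [k1,N]-CM_F) for every k1 ∈ [0,N−2]; equivalently, if and only if it is (ii) [0,N]-CM_0 (i.e., CM_F) and [0,k2]-CM_{k2} (i.e., [0,k2]-CM_L) for every k2 ∈ [2,N]. -/
open MeasureTheory ProbabilityTheory Matrix

noncomputable section

namespace CMSeq

variable {Ω : Type} [MeasurableSpace Ω]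

/-- The covariance matrix `E[(X - E X)(Y - E Y)']` of two random vectors. -/
def cov {ι κ : Type} [Fintype ι] [Fintype κ] (μ : Measure Ω)
    (X : Ω → ι → ℝ) (Y : Ω → κ → ℝ) : Matrix ι κ ℝ :=
  Matrix.of fun a b =>
    ∫ ω, (X ω a - ∫ ω', X ω' a ∂μ) * (Y ω b - ∫ ω', Y ω' b ∂μ) ∂μ

/-- The family `x 0, …, x (n-1)` of `ℝ^d`-valued random vectors is jointly Gaussian
(possibly degenerate): every linear combination of the entries has a Gaussian
distribution on `ℝ`. -/
def IsGaussianFam (μ : Measure Ω) (n d : ℕ) (x : ℕ → Ω → (Fin d → ℝ)) : Prop :=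
  ∀ a : Fin n → Fin d → ℝ, ∃ m : ℝ, ∃ v : NNReal,
    μ.map (fun ω => ∑ k : Fin n, ∑ i : Fin d, a k i * x (k : ℕ) ω i) = gaussianReal m v

/-- Jointly zero-mean Gaussian: every linear combination of the entries has a centered
Gaussian distribution on `ℝ`. -/
def IsZeroMeanGaussianFam (μ : Measure Ω) (n d : ℕ) (x : ℕ → Ω → (Fin d → ℝ)) : Prop :=
  ∀ a : Fin n → Fin d → ℝ, ∃ v : NNReal,
    μ.map (fun ω => ∑ k : Fin n, ∑ i : Fin d, a k i * x (k : ℕ) ω i) = gaussianReal 0 v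

/-- `X` is a Moore-Penrose inverse of `A`. -/
def IsMoorePenrose {m n : Type} [Fintype m] [Fintype n]
    (A : Matrix m n ℝ) (X : Matrix n m ℝ) : Prop :=
  A * X * A = A ∧ X * A * X = X ∧ (A * X)ᵀ = A * X ∧ (X * A)ᵀ = X * A

variable [StandardBorelSpace Ω]

/-- The sequence `(y k)` for `k ∈ [a, b]` is Markov: for `a ≤ j < k ≤ b`, `y k` is
conditionally independent of `(y i : a ≤ i < j)` given the σ-algebra generated by `y j`. -/
def IsMarkovOn {V : Type} [MeasurableSpace V] (μ : Measure Ω) [IsFiniteMeasure μ]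
    (y : ℕ → Ω → V) (hy : ∀ k, Measurable (y k)) (a b : ℕ) : Prop :=
  ∀ j k : ℕ, a ≤ j → j < k → k ≤ b →
    CondIndepFun (MeasurableSpace.comap (y j) inferInstance)
      (measurable_iff_comap_le.mp (hy j))
      (y k) (fun ω (i : Set.Ico a j) => y (i : ℕ) ω) μ

/-- `[x_k]` is `[k1,k2]`-CM_c : for `k1 ≤ j < k ≤ k2`, `x k` is conditionally independent
of `(x_{k1}, …, x_{j-1})` given the σ-algebra generated by `(x j, x c)`. -/
def IsCMOn {d : ℕ} (μ : Measure Ω) [IsFiniteMeasure μ] (x : ℕ → Ω → (Fin d → ℝ))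
    (hx : ∀ k, Measurable (x k)) (k1 k2 c : ℕ) : Prop :=
  ∀ j k : ℕ, k1 ≤ j → j < k → k ≤ k2 →
    CondIndepFun (MeasurableSpace.comap (fun ω => (x j ω, x c ω)) inferInstance)
      (measurable_iff_comap_le.mp ((hx j).prodMk (hx c)))
      (x k) (fun ω (i : Set.Ico k1 j) => x (i : ℕ) ω) μ

/-- `[x_k]_0^N` is reciprocal: for `0 ≤ j < k < l ≤ N`, `x k` is conditionally independent
of `(x_0, …, x_{j-1}, x_{l+1}, …, x_N)` given the σ-algebra generated by `(x j, x l)`. -/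
def IsReciprocal {d : ℕ} (μ : Measure Ω) [IsFiniteMeasure μ] (N : ℕ)
    (x : ℕ → Ω → (Fin d → ℝ)) (hx : ∀ k, Measurable (x k)) : Prop :=
  ∀ j k l : ℕ, j < k → k < l → l ≤ N →
    CondIndepFun (MeasurableSpace.comap (fun ω => (x j ω, x l ω)) inferInstance)
      (measurable_iff_comap_le.mp ((hx j).prodMk (hx l)))
      (x k) (fun ω (i : {i : ℕ // i < j ∨ (l < i ∧ i ≤ N)}) => x (i : ℕ) ω) μ

/-- `[e_k]_0^{n-1}` is a zero-mean white Gaussian sequence: jointly Gaussian, zero-mean,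
and mutually independent. -/
def IsWhiteGaussian (μ : Measure Ω) (n d : ℕ) (e : ℕ → Ω → (Fin d → ℝ)) : Prop :=
  IsZeroMeanGaussianFam μ n d e ∧
    iIndepFun (fun k : Fin n => e (k : ℕ)) μ

/-- `[x_k]_0^N` obeys the `CM_L` dynamic model with parameters `F k = G_{k,k-1}`
(for `k ∈ [1,N-1]`), `GN k = G_{k,N}` (for `k ∈ [0,N-1]`) and zero-mean white Gaussian
noise `[e_k]_0^N`:  `x_N = e_N`, `x_0 = G_{0,N} x_N + e_0` and
`x_k = G_{k,k-1} x_{k-1} + G_{k,N} x_N + e_k` for `k ∈ [1,N-1]`, all almost surely. -/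
def ObeysCMLModel (μ : Measure Ω) (N d : ℕ) (x : ℕ → Ω → (Fin d → ℝ))
    (F GN : ℕ → Matrix (Fin d) (Fin d) ℝ) (e : ℕ → Ω → (Fin d → ℝ)) : Prop :=
  (∀ k, Measurable (e k)) ∧ IsWhiteGaussian μ (N + 1) d e ∧
    (∀ᵐ ω ∂μ, x N ω = e N ω) ∧
    (∀ᵐ ω ∂μ, x 0 ω = (GN 0).mulVec (x N ω) + e 0 ω) ∧
    (∀ k : ℕ, 1 ≤ k → k ≤ N - 1 →
      ∀ᵐ ω ∂μ, x k ω = (F k).mulVec (x (k - 1) ω) + (GN k).mulVec (x N ω) + e k ω)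

/-- `[x_k]_0^N` obeys the `CM_F` dynamic model with parameters `F k = G_{k,k-1}` and
`G0 k = G_{k,0}` (for `k ∈ [1,N]`) and zero-mean white Gaussian noise `[e_k]_0^N`:
`x_0 = e_0` and `x_k = G_{k,k-1} x_{k-1} + G_{k,0} x_0 + e_k` for `k ∈ [1,N]`. -/
def ObeysCMFModel (μ : Measure Ω) (N d : ℕ) (x : ℕ → Ω → (Fin d → ℝ))
    (F G0 : ℕ → Matrix (Fin d) (Fin d) ℝ) (e : ℕ → Ω → (Fin d → ℝ)) : Prop :=
  (∀ k, Measurable (e k)) ∧ IsWhiteGaussian μ (N + 1) d e ∧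
    (∀ᵐ ω ∂μ, x 0 ω = e 0 ω) ∧
    (∀ k : ℕ, 1 ≤ k → k ≤ N →
      ∀ᵐ ω ∂μ, x k ω = (F k).mulVec (x (k - 1) ω) + (G0 k).mulVec (x 0 ω) + e k ω)

/-- The `(N+1)d × (N+1)d` block matrix `𝓖` of the `CM_L` model: identity diagonal blocks,
block `-(F k)` in block position `(k, k-1)` for `k ∈ [1, N-1]`, block `-(GN k)` in block
position `(k, N)` for `k ∈ [0, N-1]`, and zero blocks elsewhere. -/
def scriptG (N d : ℕ) (F GN : ℕ → Matrix (Fin d) (Fin d) ℝ) :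
    Matrix (Fin (N + 1) × Fin d) (Fin (N + 1) × Fin d) ℝ :=
  Matrix.of fun p q =>
    (if p.1 = q.1 then (1 : Matrix (Fin d) (Fin d) ℝ) p.2 q.2 else 0)
    - (if (p.1 : ℕ) = (q.1 : ℕ) + 1 ∧ 1 ≤ (p.1 : ℕ) ∧ (p.1 : ℕ) ≤ N - 1
        then (F (p.1 : ℕ)) p.2 q.2 else 0)
    - (if (q.1 : ℕ) = N ∧ (p.1 : ℕ) ≤ N - 1 then (GN (p.1 : ℕ)) p.2 q.2 else 0)

/-- The `(N+1)d × (N+1)d` block-diagonal matrix `G = diag(G_0, …, G_N)` with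
`G_k = Cov(e_k)`. -/
def blockDiagCov (μ : Measure Ω) (N d : ℕ) (e : ℕ → Ω → (Fin d → ℝ)) :
    Matrix (Fin (N + 1) × Fin d) (Fin (N + 1) × Fin d) ℝ :=
  Matrix.of fun p q =>
    if p.1 = q.1 then cov μ (e (p.1 : ℕ)) (e (q.1 : ℕ)) p.2 q.2 else 0

/-- The covariance matrix `P = 𝓖⁻¹ G (𝓖')⁻¹` determined by the parameters of a `CM_L`
model. -/
def bigP (μ : Measure Ω) (N d : ℕ) (F GN : ℕ → Matrix (Fin d) (Fin d) ℝ)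
    (e : ℕ → Ω → (Fin d → ℝ)) :
    Matrix (Fin (N + 1) × Fin d) (Fin (N + 1) × Fin d) ℝ :=
  (scriptG N d F GN)⁻¹ * blockDiagCov μ N d e * ((scriptG N d F GN)ᵀ)⁻¹

/-- The `(i,j)` `d × d` block of an `(N+1)d × (N+1)d` matrix. -/
def blk {N d : ℕ} (P : Matrix (Fin (N + 1) × Fin d) (Fin (N + 1) × Fin d) ℝ)
    (i j : Fin (N + 1)) : Matrix (Fin d) (Fin d) ℝ :=
  Matrix.of fun a b => P (i, a) (j, b)

/-- The reciprocal/CM covariance identity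
`C_{k,i} = [C_{k,j} C_{k,l}] ([[C_j, C_{j,l}],[C_{l,j}, C_l]])⁺ [C_{j,i}; C_{l,i}]`,
phrased for every Moore-Penrose inverse of the middle matrix. -/
def CovCMIdentity {d : ℕ} (C : ℕ → ℕ → Matrix (Fin d) (Fin d) ℝ) (i j k l : ℕ) : Prop :=
  ∀ M : Matrix (Fin d ⊕ Fin d) (Fin d ⊕ Fin d) ℝ,
    IsMoorePenrose (Matrix.fromBlocks (C j j) (C j l) (C l j) (C l l)) M →
      C k i = Matrix.fromCols (C k j) (C k l) * M * Matrix.fromRows (C j i) (C l i)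
/-- The CM/reciprocal identity for the `d × d` blocks of a big block matrix `P`, phrased
for every Moore-Penrose inverse of the middle matrix. -/
def BlkCMIdentity {N d : ℕ} (P : Matrix (Fin (N + 1) × Fin d) (Fin (N + 1) × Fin d) ℝ)
    (i j k l : Fin (N + 1)) : Prop :=
  ∀ M : Matrix (Fin d ⊕ Fin d) (Fin d ⊕ Fin d) ℝ,
    IsMoorePenrose (Matrix.fromBlocks (blk P j j) (blk P j l) (blk P l j) (blk P l l)) M →
      blk P k i =
        Matrix.fromCols (blk P k j) (blk P k l) * M *
          Matrix.fromRows (blk P j i) (blk P l i)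

end CMSeq

/-!
Conditional independence of σ-algebras is characterised by `μ⟦t | m' ⊔ m₂⟧ = μ⟦t | m'⟧` for
`t ∈ m₁`, from which the semi-graphoid rules (weak union, contraction) follow. Chaining one-step
conditional independences with these rules upgrades a CM property to the independence of the whole
past and future given the present (and `x_c`), and reciprocity to the independence of the inside
of an interval from its outside given the endpoints; restricting the latter yields `[k1,N]`-CM_F,
while reciprocity restricts directly to `[0,l]`-CM_L. Conversely, for `j < k < l`, `[j,N]`-CM_F
(resp. `[0,l]`-CM_L) separates `x_k` from the far side `(l,N]` (resp. `[0,j)`) given `x_j, x_l`;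
CM_L (resp. CM_F) separates it from the other side given in addition the first one, and
contraction combines the two.
-/

namespace CMSeq

open MeasurableSpace

section CondIndepCalculus

variable {Ω : Type*} {m' m₁ m₂ a b₁ b₂ mΩ : MeasurableSpace Ω} {μ : Measure Ω}

theorem setIntegral_eq_of_isPiSystem {m : MeasurableSpace Ω} (hm : m ≤ mΩ)
    {C : Set (Set Ω)} (hgen : m = generateFrom C) (hC : IsPiSystem C) {f g : Ω → ℝ}
    (hf : Integrable f μ) (hg : Integrable g μ) (huniv : ∫ ω, f ω ∂μ = ∫ ω, g ω ∂μ)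
    (hCeq : ∀ s ∈ C, ∫ ω in s, f ω ∂μ = ∫ ω in s, g ω ∂μ) {s : Set Ω}
    (hs : MeasurableSet[m] s) : ∫ ω in s, f ω ∂μ = ∫ ω in s, g ω ∂μ := by
  induction s, hs using induction_on_inter hgen hC with
  | empty => simp
  | basic t ht => exact hCeq t ht
  | compl t ht iht =>
    have hf_add := integral_add_compl (hm t ht) hf
    have hg_add := integral_add_compl (hm t ht) hg
    linarith
  | iUnion t hdisj ht iht =>
    rw [integral_iUnion (fun i => hm _ (ht i)) hdisj hf.integrableOn,
      integral_iUnion (fun i => hm _ (ht i)) hdisj hg.integrableOn]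
    exact tsum_congr iht

theorem isPiSystem_inter_measurableSet (m₁ m₂ : MeasurableSpace Ω) :
    IsPiSystem (Set.image2 (· ∩ ·) {s | MeasurableSet[m₁] s} {s | MeasurableSet[m₂] s}) := by
  rintro _ ⟨s₁, hs₁, t₁, ht₁, rfl⟩ _ ⟨s₂, hs₂, t₂, ht₂, rfl⟩ -
  exact ⟨s₁ ∩ s₂, hs₁.inter hs₂, t₁ ∩ t₂, ht₁.inter ht₂, Set.inter_inter_inter_comm s₁ s₂ t₁ t₂⟩

theorem sup_eq_generateFrom_inter (m₁ m₂ : MeasurableSpace Ω) :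
    m₁ ⊔ m₂ = generateFrom (Set.image2 (· ∩ ·) {s | MeasurableSet[m₁] s}
      {s | MeasurableSet[m₂] s}) := by
  refine le_antisymm (sup_le ?_ ?_) (generateFrom_le ?_)
  · exact fun s hs => measurableSet_generateFrom ⟨s, hs, Set.univ, .univ, s.inter_univ⟩
  · exact fun s hs => measurableSet_generateFrom ⟨Set.univ, .univ, s, hs, s.univ_inter⟩
  · rintro _ ⟨s₁, hs₁, s₂, hs₂, rfl⟩
    exact (le_sup_left (b := m₂) _ hs₁).inter (le_sup_right (a := m₁) _ hs₂)

variable [IsFiniteMeasure μ]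

theorem condExp_indicator_condExp_ae_eq_mul (f : Ω → ℝ) {s : Set Ω}
    (hs : MeasurableSet[mΩ] s) :
    μ[s.indicator (μ[f | m']) | m'] =ᵐ[μ] μ[f | m'] * μ⟦s | m'⟧ := by
  have h_eq : s.indicator (μ[f | m']) = μ[f | m'] * s.indicator fun _ => (1 : ℝ) := by
    ext ω
    simpa using Set.indicator_mul_right s (μ[f | m']) fun _ => (1 : ℝ)
  rw [h_eq]
  refine condExp_mul_of_stronglyMeasurable_left stronglyMeasurable_condExp ?_
    ((integrable_const 1).indicator hs)
  rw [← h_eq]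
  exact integrable_condExp.indicator hs

theorem condExp_ae_eq_of_le_of_le {m₀ m₁ m₂ : MeasurableSpace Ω} (h₀₁ : m₀ ≤ m₁) (h₁₂ : m₁ ≤ m₂)
    (h₂ : m₂ ≤ mΩ) {f : Ω → ℝ} (h : μ[f | m₂] =ᵐ[μ] μ[f | m₀]) :
    μ[f | m₁] =ᵐ[μ] μ[f | m₀] :=
  calc μ[f | m₁]
      =ᵐ[μ] μ[μ[f | m₂] | m₁] := (condExp_condExp_of_le h₁₂ h₂).symm
    _ =ᵐ[μ] μ[μ[f | m₀] | m₁] := condExp_congr_ae h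
    _ = μ[f | m₀] := condExp_of_stronglyMeasurable (h₁₂.trans h₂)
          (stronglyMeasurable_condExp.mono h₀₁) integrable_condExp

variable [StandardBorelSpace Ω]

theorem CondIndep.condExp_indicator_sup_ae_eq (hm' : m' ≤ mΩ) (hm₁ : m₁ ≤ mΩ)
    (hm₂ : m₂ ≤ mΩ) (h : CondIndep m' m₁ m₂ hm' μ) {t : Set Ω} (ht : MeasurableSet[m₁] t) :
    μ⟦t | m' ⊔ m₂⟧ =ᵐ[μ] μ⟦t | m'⟧ := by
  have ht' := hm₁ t ht
  have hint : Integrable (t.indicator fun _ => (1 : ℝ)) μ := (integrable_const 1).indicator ht'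
  -- `μ⟦t | m'⟧` has the defining set integrals of `μ⟦t | m' ⊔ m₂⟧` on the π-system `m' ∩ m₂`
  have h_basic : ∀ s ∈ Set.image2 (· ∩ ·) {s | MeasurableSet[m'] s} {s | MeasurableSet[m₂] s},
      ∫ ω in s, (μ⟦t | m'⟧) ω ∂μ = ∫ ω in s, t.indicator (fun _ => (1 : ℝ)) ω ∂μ := by
    rintro _ ⟨s₁, hs₁, s₂, hs₂, rfl⟩
    have hs₂' := hm₂ s₂ hs₂
    have h_mul : μ[s₂.indicator (μ⟦t | m'⟧) | m'] =ᵐ[μ] μ⟦t ∩ s₂ | m'⟧ :=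
      (condExp_indicator_condExp_ae_eq_mul _ hs₂').trans
        ((condIndep_iff m' m₁ m₂ hm' hm₁ hm₂ μ).mp h t s₂ ht hs₂).symm
    calc ∫ ω in s₁ ∩ s₂, (μ⟦t | m'⟧) ω ∂μ
        = ∫ ω in s₁, μ[s₂.indicator (μ⟦t | m'⟧) | m'] ω ∂μ := by
          rw [setIntegral_condExp hm' (integrable_condExp.indicator hs₂') hs₁,
            setIntegral_indicator hs₂']
      _ = ∫ ω in s₁, (μ⟦t ∩ s₂ | m'⟧) ω ∂μ := setIntegral_congr_ae (hm' s₁ hs₁)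
          (h_mul.mono fun ω hω _ => hω)
      _ = ∫ ω in s₁ ∩ s₂, t.indicator (fun _ => (1 : ℝ)) ω ∂μ := by
          rw [setIntegral_condExp hm' ((integrable_const 1).indicator (ht'.inter hs₂')) hs₁,
            ← setIntegral_indicator hs₂', Set.indicator_indicator, Set.inter_comm]
  have hsup : m' ⊔ m₂ ≤ mΩ := sup_le hm' hm₂
  refine (ae_eq_condExp_of_forall_setIntegral_eq hsup hint
    (fun s _ _ => integrable_condExp.integrableOn) (fun s hs _ => ?_)
    (stronglyMeasurable_condExp.mono (le_sup_left : m' ≤ m' ⊔ m₂)).aestronglyMeasurable).symm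
  exact setIntegral_eq_of_isPiSystem hsup (sup_eq_generateFrom_inter m' m₂)
    (isPiSystem_inter_measurableSet m' m₂) integrable_condExp hint (integral_condExp hm')
    h_basic hs

theorem condIndep_of_condExp_indicator_sup_ae_eq (hm' : m' ≤ mΩ) (hm₁ : m₁ ≤ mΩ)
    (hm₂ : m₂ ≤ mΩ) (h : ∀ t, MeasurableSet[m₁] t → μ⟦t | m' ⊔ m₂⟧ =ᵐ[μ] μ⟦t | m'⟧) :
    CondIndep m' m₁ m₂ hm' μ := by
  refine (condIndep_iff m' m₁ m₂ hm' hm₁ hm₂ μ).mpr fun t₁ t₂ ht₁ ht₂ => ?_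
  have hint : Integrable (t₁.indicator fun _ => (1 : ℝ)) μ :=
    (integrable_const 1).indicator (hm₁ t₁ ht₁)
  have hsup : m' ⊔ m₂ ≤ mΩ := sup_le hm' hm₂
  have ht₂' : MeasurableSet[m' ⊔ m₂] t₂ := le_sup_right (a := m') _ ht₂
  calc μ⟦t₁ ∩ t₂ | m'⟧
      = μ[t₂.indicator (t₁.indicator fun _ => (1 : ℝ)) | m'] := by
        rw [Set.indicator_indicator, Set.inter_comm]
    _ =ᵐ[μ] μ[μ[t₂.indicator (t₁.indicator fun _ => (1 : ℝ)) | m' ⊔ m₂] | m'] :=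
        (condExp_condExp_of_le le_sup_left hsup).symm
    _ =ᵐ[μ] μ[t₂.indicator (μ⟦t₁ | m'⟧) | m'] := by
        refine condExp_congr_ae ((condExp_indicator hint ht₂').trans ?_)
        exact (h t₁ ht₁).mono fun ω hω => by simp only [Set.indicator, hω]
    _ =ᵐ[μ] μ⟦t₁ | m'⟧ * μ⟦t₂ | m'⟧ :=
        condExp_indicator_condExp_ae_eq_mul _ (hm₂ t₂ ht₂)

theorem condIndep_iff_condExp_indicator_sup_ae_eq (hm' : m' ≤ mΩ) (hm₁ : m₁ ≤ mΩ)
    (hm₂ : m₂ ≤ mΩ) :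
    CondIndep m' m₁ m₂ hm' μ ↔ ∀ t, MeasurableSet[m₁] t → μ⟦t | m' ⊔ m₂⟧ =ᵐ[μ] μ⟦t | m'⟧ :=
  ⟨fun h _ ht => CondIndep.condExp_indicator_sup_ae_eq hm' hm₁ hm₂ h ht,
    condIndep_of_condExp_indicator_sup_ae_eq hm' hm₁ hm₂⟩

theorem condIndep_congr {n' n₁ n₂ : MeasurableSpace Ω} {hm' : m' ≤ mΩ} {hn' : n' ≤ mΩ}
    (e' : m' = n') (e₁ : m₁ = n₁) (e₂ : m₂ = n₂) :
    CondIndep m' m₁ m₂ hm' μ ↔ CondIndep n' n₁ n₂ hn' μ := by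
  subst e' e₁ e₂
  rfl

theorem condIndep_of_left_le_cond (hm' : m' ≤ mΩ) (ha : a ≤ m') (hb : b₁ ≤ mΩ) :
    CondIndep m' a b₁ hm' μ := by
  refine condIndep_of_condExp_indicator_sup_ae_eq hm' (ha.trans hm') hb fun t ht => ?_
  have hint : Integrable (t.indicator fun _ => (1 : ℝ)) μ :=
    (integrable_const 1).indicator (hm' t (ha t ht))
  have hmeas : StronglyMeasurable[m'] (t.indicator fun _ => (1 : ℝ)) :=
    (stronglyMeasurable_const.indicator ht).mono ha
  rw [condExp_of_stronglyMeasurable (sup_le hm' hb) (hmeas.mono le_sup_left) hint,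
    condExp_of_stronglyMeasurable hm' hmeas hint]

theorem CondIndep.weakUnion (hm' : m' ≤ mΩ) (ha : a ≤ mΩ) (hb₁ : b₁ ≤ mΩ) (hb₂ : b₂ ≤ mΩ)
    (h : CondIndep m' a (b₁ ⊔ b₂) hm' μ) : CondIndep (m' ⊔ b₂) a b₁ (sup_le hm' hb₂) μ := by
  rw [condIndep_iff_condExp_indicator_sup_ae_eq hm' ha (sup_le hb₁ hb₂)] at h
  rw [condIndep_iff_condExp_indicator_sup_ae_eq (sup_le hm' hb₂) ha hb₁]
  intro t ht
  have h_sup : m' ⊔ b₂ ⊔ b₁ = m' ⊔ (b₁ ⊔ b₂) := by rw [sup_assoc, sup_comm b₂]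
  rw [h_sup]
  exact (h t ht).trans (condExp_ae_eq_of_le_of_le le_sup_left
    (sup_le_sup_left le_sup_right m') (sup_le hm' (sup_le hb₁ hb₂)) (h t ht)).symm

theorem CondIndep.contraction (hm' : m' ≤ mΩ) (ha : a ≤ mΩ) (hb₁ : b₁ ≤ mΩ) (hb₂ : b₂ ≤ mΩ)
    (h₁ : CondIndep m' a b₁ hm' μ) (h₂ : CondIndep (m' ⊔ b₁) a b₂ (sup_le hm' hb₁) μ) :
    CondIndep m' a (b₁ ⊔ b₂) hm' μ := by
  rw [condIndep_iff_condExp_indicator_sup_ae_eq hm' ha hb₁] at h₁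
  rw [condIndep_iff_condExp_indicator_sup_ae_eq (sup_le hm' hb₁) ha hb₂] at h₂
  rw [condIndep_iff_condExp_indicator_sup_ae_eq hm' ha (sup_le hb₁ hb₂)]
  intro t ht
  rw [← sup_assoc]
  exact (h₂ t ht).trans (h₁ t ht)

theorem CondIndep.sup_right_of_le_cond (hm' : m' ≤ mΩ) (ha : a ≤ mΩ) (hb₁ : b₁ ≤ mΩ)
    (hb₂ : b₂ ≤ m') (h : CondIndep m' a b₁ hm' μ) : CondIndep m' a (b₂ ⊔ b₁) hm' μ := by
  rw [condIndep_iff_condExp_indicator_sup_ae_eq hm' ha hb₁] at h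
  rw [condIndep_iff_condExp_indicator_sup_ae_eq hm' ha (sup_le (hb₂.trans hm') hb₁),
    ← sup_assoc, sup_eq_left.mpr hb₂]
  exact h

end CondIndepCalculus

section SigmaAlgebraSequences

variable {Ω : Type*} {mΩ : MeasurableSpace Ω} {m : ℕ → MeasurableSpace Ω}

theorem biSup_le_of_le (hm : ∀ i, m i ≤ mΩ) (S : Set ℕ) : ⨆ i ∈ S, m i ≤ mΩ :=
  iSup₂_le fun i _ => hm i

theorem le_biSup_of_mem (m : ℕ → MeasurableSpace Ω) {S : Set ℕ} {i : ℕ} (hi : i ∈ S) :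
    m i ≤ ⨆ r ∈ S, m r :=
  le_iSup₂ (f := fun r _ => m r) i hi

theorem sup_biSup_Ico_eq_sup_biSup_Ioc (m : ℕ → MeasurableSpace Ω) {j n : ℕ} (h : j ≤ n) :
    m n ⊔ ⨆ i ∈ Set.Ico j n, m i = m j ⊔ ⨆ i ∈ Set.Ioc j n, m i := by
  rw [← iSup_insert, ← iSup_insert, Set.Ico_insert_right h, Set.Ioc_insert_left h]

variable [StandardBorelSpace Ω]

def IsSigmaCMOn (μ : Measure Ω) [IsFiniteMeasure μ] (m : ℕ → MeasurableSpace Ω)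
    (hm : ∀ i, m i ≤ mΩ) (k1 k2 c : ℕ) : Prop :=
  ∀ j k : ℕ, k1 ≤ j → j < k → k ≤ k2 →
    CondIndep (m j ⊔ m c) (m k) (⨆ i ∈ Set.Ico k1 j, m i) (sup_le (hm j) (hm c)) μ

def IsSigmaReciprocal (μ : Measure Ω) [IsFiniteMeasure μ] (N : ℕ) (m : ℕ → MeasurableSpace Ω)
    (hm : ∀ i, m i ≤ mΩ) : Prop :=
  ∀ j k l : ℕ, j < k → k < l → l ≤ N →
    CondIndep (m j ⊔ m l) (m k) (⨆ i ∈ Set.Iio j ∪ Set.Ioc l N, m i) (sup_le (hm j) (hm l)) μ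

variable {μ : Measure Ω} [IsFiniteMeasure μ]

theorem condIndep_biSup_Ioc_of_succ (hm : ∀ i, m i ≤ mΩ) {Z P : MeasurableSpace Ω}
    (hZ : Z ≤ mΩ) (hP : P ≤ mΩ) {j n : ℕ} (hjn : j ≤ n)
    (hstep : ∀ i, j ≤ i → i < n → CondIndep (m i ⊔ Z) (m (i + 1))
      (P ⊔ ⨆ r ∈ Set.Ico j i, m r) (sup_le (hm i) hZ) μ) :
    CondIndep (m j ⊔ Z) P (⨆ r ∈ Set.Ioc j n, m r) (sup_le (hm j) hZ) μ := by
  induction n, hjn using Nat.le_induction with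
  | base =>
    rw [Set.Ioc_self, iSup_emptyset]
    exact condIndep_bot_right _
  | succ n hjn ih =>
    have h_last := CondIndep.weakUnion (sup_le (hm n) hZ) (hm (n + 1)) hP
      (biSup_le_of_le hm _) (hstep n hjn n.lt_succ_self)
    have h_cond : m n ⊔ Z ⊔ ⨆ i ∈ Set.Ico j n, m i = m j ⊔ Z ⊔ ⨆ i ∈ Set.Ioc j n, m i := by
      rw [sup_right_comm, sup_biSup_Ico_eq_sup_biSup_Ioc m hjn, sup_right_comm]
    simp only [h_cond] at h_last
    have h := CondIndep.contraction (sup_le (hm j) hZ) hP (biSup_le_of_le hm _) (hm (n + 1))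
      (ih fun i hi hin => hstep i hi (by omega)) h_last.symm
    have h_Ioc : Set.Ioc j (n + 1) = insert (n + 1) (Set.Ioc j n) :=
      Set.ext fun i => by simp only [Set.mem_insert_iff, Set.mem_Ioc]; omega
    rwa [h_Ioc, iSup_insert, sup_comm (m (n + 1))]

theorem IsSigmaCMOn.condIndep_past_future {hm : ∀ i, m i ≤ mΩ} {k1 k2 c : ℕ}
    (h : IsSigmaCMOn μ m hm k1 k2 c) {j : ℕ} (hj : k1 ≤ j) (hjk2 : j ≤ k2) :
    CondIndep (m j ⊔ m c) (⨆ i ∈ Set.Ico k1 j, m i) (⨆ i ∈ Set.Ioc j k2, m i)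
      (sup_le (hm j) (hm c)) μ :=
  condIndep_biSup_Ioc_of_succ hm (hm c) (biSup_le_of_le hm _) hjk2 fun i hji hik2 => by
    rw [← iSup_union, Set.Ico_union_Ico_eq_Ico hj hji]
    exact h i (i + 1) (hj.trans hji) i.lt_succ_self hik2

theorem IsSigmaReciprocal.condIndep_outside_inside {hm : ∀ i, m i ≤ mΩ} {N : ℕ}
    (h : IsSigmaReciprocal μ N m hm) {p q : ℕ} (hpq : p < q) (hqN : q ≤ N) :
    CondIndep (m p ⊔ m q) (⨆ i ∈ Set.Iio p ∪ Set.Ioc q N, m i) (⨆ i ∈ Set.Ioo p q, m i)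
      (sup_le (hm p) (hm q)) μ := by
  have h_Ioo : Set.Ioo p q = Set.Ioc p (q - 1) :=
    Set.ext fun i => by simp only [Set.mem_Ioo, Set.mem_Ioc]; omega
  rw [h_Ioo]
  refine condIndep_biSup_Ioc_of_succ hm (hm q) (biSup_le_of_le hm _) (by omega)
    fun i hpi hiq => ?_
  have h_out : Set.Iio i ∪ Set.Ioc q N = (Set.Iio p ∪ Set.Ioc q N) ∪ Set.Ico p i :=
    Set.ext fun r => by simp only [Set.mem_union, Set.mem_Iio, Set.mem_Ioc, Set.mem_Ico]; omega
  rw [← iSup_union, ← h_out]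
  exact h i (i + 1) q i.lt_succ_self (by omega) hqN

theorem IsSigmaReciprocal.isSigmaCMOn_first {hm : ∀ i, m i ≤ mΩ} {N : ℕ}
    (h : IsSigmaReciprocal μ N m hm) (k1 : ℕ) : IsSigmaCMOn μ m hm k1 N k1 := by
  intro j k hk1j hjk hkN
  rcases hk1j.eq_or_lt with rfl | hk1j
  · rw [Set.Ico_self, iSup_emptyset]
    exact condIndep_bot_right _
  have h_inside : CondIndep (m k1 ⊔ m j) (m k) (⨆ i ∈ Set.Ioo k1 j, m i)
      (sup_le (hm k1) (hm j)) μ :=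
    condIndep_of_condIndep_of_le_left (h.condIndep_outside_inside hk1j (by omega))
      (le_biSup_of_mem m (Or.inr ⟨hjk, hkN⟩))
  have h_Ico : Set.Ico k1 j = insert k1 (Set.Ioo k1 j) :=
    (Set.Ioo_insert_left hk1j).symm
  rw [h_Ico, iSup_insert]
  simpa only [sup_comm (m k1)] using
    CondIndep.sup_right_of_le_cond _ (hm k) (biSup_le_of_le hm _) le_sup_left h_inside

theorem IsSigmaReciprocal.isSigmaCMOn_last {hm : ∀ i, m i ≤ mΩ} {N : ℕ}
    (h : IsSigmaReciprocal μ N m hm) {l : ℕ} (hlN : l ≤ N) : IsSigmaCMOn μ m hm 0 l l := by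
  intro j k _ hjk hkl
  rcases hkl.lt_or_eq with hkl | rfl
  · exact condIndep_of_condIndep_of_le_right (h j k l hjk hkl hlN)
      (biSup_mono fun i hi => Or.inl hi.2)
  · exact condIndep_of_left_le_cond _ le_sup_right (biSup_le_of_le hm _)

theorem isSigmaReciprocal_of_isSigmaCMOn_last {hm : ∀ i, m i ≤ mΩ} {N : ℕ}
    (hL : IsSigmaCMOn μ m hm 0 N N) (hF : ∀ k1, k1 ≤ N - 2 → IsSigmaCMOn μ m hm k1 N k1) :
    IsSigmaReciprocal μ N m hm := by
  intro j k l hjk hkl hlN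
  have h_future : CondIndep (m j ⊔ m l) (m k) (⨆ i ∈ Set.Ioc l N, m i)
      (sup_le (hm j) (hm l)) μ := by
    have h := condIndep_of_condIndep_of_le_left
      ((hF j (by omega)).condIndep_past_future (hjk.trans hkl).le hlN)
      (le_biSup_of_mem m ⟨hjk.le, hkl⟩)
    simpa only [sup_comm (m l)] using h
  have h_past : CondIndep (m j ⊔ m l ⊔ ⨆ i ∈ Set.Ioc l N, m i) (m k) (⨆ i ∈ Set.Ico 0 j, m i)
      (sup_le (sup_le (hm j) (hm l)) (biSup_le_of_le hm _)) μ := by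
    have h := CondIndep.weakUnion (sup_le (hm j) (hm N)) (biSup_le_of_le hm _) (hm k)
      (biSup_le_of_le hm _) (condIndep_of_condIndep_of_le_right
        (hL.condIndep_past_future (Nat.zero_le j) (by omega))
        (sup_le (le_biSup_of_mem m ⟨hjk, hkl.le.trans hlN⟩)
          (biSup_mono fun i hi => ⟨hjk.trans_le (hkl.le.trans hi.1), hi.2⟩ :
            ⨆ i ∈ Set.Icc l N, m i ≤ _)))
    have h_cond : m j ⊔ m N ⊔ ⨆ i ∈ Set.Icc l N, m i = m j ⊔ m l ⊔ ⨆ i ∈ Set.Ioc l N, m i := by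
      rw [sup_assoc, sup_eq_right.mpr (le_biSup_of_mem m (Set.right_mem_Icc.mpr hlN)),
        ← Set.Ioc_insert_left hlN, iSup_insert, sup_assoc]
    simp only [h_cond] at h
    exact CondIndep.symm h
  have h := CondIndep.contraction _ (hm k) (biSup_le_of_le hm _) (biSup_le_of_le hm _)
    h_future h_past
  have h_out : Set.Ioc l N ∪ Set.Ico 0 j = Set.Iio j ∪ Set.Ioc l N :=
    Set.ext fun i => by simp only [Set.mem_union, Set.mem_Ioc, Set.mem_Ico, Set.mem_Iio]; omega
  rwa [← iSup_union, h_out] at h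

theorem isSigmaReciprocal_of_isSigmaCMOn_first {hm : ∀ i, m i ≤ mΩ} {N : ℕ}
    (hF : IsSigmaCMOn μ m hm 0 N 0) (hL : ∀ k2, 2 ≤ k2 → k2 ≤ N → IsSigmaCMOn μ m hm 0 k2 k2) :
    IsSigmaReciprocal μ N m hm := by
  intro j k l hjk hkl hlN
  have h_past : CondIndep (m j ⊔ m l) (m k) (⨆ i ∈ Set.Ico 0 j, m i)
      (sup_le (hm j) (hm l)) μ :=
    CondIndep.symm (condIndep_of_condIndep_of_le_right
      ((hL l (by omega) hlN).condIndep_past_future (Nat.zero_le j) (hjk.trans hkl).le)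
      (le_biSup_of_mem m ⟨hjk, hkl.le⟩))
  have h_future : CondIndep (m j ⊔ m l ⊔ ⨆ i ∈ Set.Ico 0 j, m i) (m k)
      (⨆ i ∈ Set.Ioc l N, m i) (sup_le (sup_le (hm j) (hm l)) (biSup_le_of_le hm _)) μ := by
    have h := CondIndep.weakUnion (sup_le (hm l) (hm 0)) (biSup_le_of_le hm _) (hm k)
      (biSup_le_of_le hm _) (condIndep_of_condIndep_of_le_right
        (CondIndep.symm (hF.condIndep_past_future (Nat.zero_le l) hlN))
        (sup_le (le_biSup_of_mem m ⟨Nat.zero_le k, hkl⟩)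
          (biSup_mono fun i hi => ⟨hi.1, hi.2.trans_lt (hjk.trans hkl)⟩ :
            ⨆ i ∈ Set.Icc 0 j, m i ≤ _)))
    have h_cond : m l ⊔ m 0 ⊔ ⨆ i ∈ Set.Icc 0 j, m i = m j ⊔ m l ⊔ ⨆ i ∈ Set.Ico 0 j, m i := by
      rw [sup_assoc, sup_eq_right.mpr (le_biSup_of_mem m (Set.left_mem_Icc.mpr (Nat.zero_le j))),
        ← Set.Ico_insert_right (Nat.zero_le j), iSup_insert, ← sup_assoc, sup_comm (m l)]
    simp only [h_cond] at h
    exact CondIndep.symm h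
  have h := CondIndep.contraction _ (hm k) (biSup_le_of_le hm _) (biSup_le_of_le hm _)
    h_past h_future
  have h_out : Set.Ico 0 j ∪ Set.Ioc l N = Set.Iio j ∪ Set.Ioc l N :=
    Set.ext fun i => by simp only [Set.mem_union, Set.mem_Ioc, Set.mem_Ico, Set.mem_Iio]; omega
  rwa [← iSup_union, h_out] at h

end SigmaAlgebraSequences

theorem comap_pi_eq_biSup {Ω ι E : Type*} [MeasurableSpace E] (x : ι → Ω → E) (S : Set ι) :
    MeasurableSpace.comap (fun ω (i : S) => x i ω) MeasurableSpace.pi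
      = ⨆ i ∈ S, MeasurableSpace.comap (x i) inferInstance := by
  rw [MeasurableSpace.pi, MeasurableSpace.comap_iSup, iSup_subtype']
  simp_rw [MeasurableSpace.comap_comp]
  rfl

section RandomVectors

variable {Ω : Type} [MeasurableSpace Ω] [StandardBorelSpace Ω] {μ : Measure Ω}
  [IsFiniteMeasure μ] {d : ℕ} {x : ℕ → Ω → (Fin d → ℝ)} {hx : ∀ k, Measurable (x k)}

theorem isCMOn_iff_isSigmaCMOn {k1 k2 c : ℕ} :
    IsCMOn μ x hx k1 k2 c ↔ IsSigmaCMOn μ (fun i => MeasurableSpace.comap (x i) inferInstance)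
      (fun i => (hx i).comap_le) k1 k2 c :=
  forall₂_congr fun j _ => forall₃_congr fun _ _ _ =>
    (condIndepFun_iff_condIndep _ _ _ _ μ).trans
      (condIndep_congr (comap_prodMk (x j) (x c)) rfl (comap_pi_eq_biSup x _))

theorem isReciprocal_iff_isSigmaReciprocal {N : ℕ} :
    IsReciprocal μ N x hx ↔ IsSigmaReciprocal μ N
      (fun i => MeasurableSpace.comap (x i) inferInstance) (fun i => (hx i).comap_le) :=
  forall₃_congr fun j _ l => forall₃_congr fun _ _ _ =>
    (condIndepFun_iff_condIndep _ _ _ _ μ).trans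
      (condIndep_congr (comap_prodMk (x j) (x l)) rfl (comap_pi_eq_biSup x _))

end RandomVectors

end CMSeq

open CMSeq in
theorem statement2_general {Ω : Type} [MeasurableSpace Ω] [StandardBorelSpace Ω]
    (μ : MeasureTheory.Measure Ω) [MeasureTheory.IsProbabilityMeasure μ]
    (N d : ℕ)
    (x : ℕ → Ω → (Fin d → ℝ)) (hx : ∀ k, Measurable (x k)) :
    (IsReciprocal μ N x hx ↔
      (IsCMOn μ x hx 0 N N ∧ ∀ k1 : ℕ, k1 ≤ N - 2 → IsCMOn μ x hx k1 N k1)) ∧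
    (IsReciprocal μ N x hx ↔
      (IsCMOn μ x hx 0 N 0 ∧ ∀ k2 : ℕ, 2 ≤ k2 → k2 ≤ N → IsCMOn μ x hx 0 k2 k2)) := by
  simp only [isReciprocal_iff_isSigmaReciprocal, isCMOn_iff_isSigmaCMOn]
  exact ⟨⟨fun h => ⟨h.isSigmaCMOn_last le_rfl, fun k1 _ => h.isSigmaCMOn_first k1⟩,
      fun h => isSigmaReciprocal_of_isSigmaCMOn_last h.1 h.2⟩,
    ⟨fun h => ⟨h.isSigmaCMOn_first 0, fun _ _ hk2 => h.isSigmaCMOn_last hk2⟩,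
      fun h => isSigmaReciprocal_of_isSigmaCMOn_first h.1 h.2⟩⟩

open CMSeq in
theorem statement2 {Ω : Type} [MeasurableSpace Ω] [StandardBorelSpace Ω]
    (μ : MeasureTheory.Measure Ω) [MeasureTheory.IsProbabilityMeasure μ]
    (N d : ℕ) (hN : 2 ≤ N) (hd : 1 ≤ d)
    (x : ℕ → Ω → (Fin d → ℝ)) (hx : ∀ k, Measurable (x k)) :
    (IsReciprocal μ N x hx ↔
      (IsCMOn μ x hx 0 N N ∧ ∀ k1 : ℕ, k1 ≤ N - 2 → IsCMOn μ x hx k1 N k1)) ∧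
    (IsReciprocal μ N x hx ↔
      (IsCMOn μ x hx 0 N 0 ∧ ∀ k2 : ℕ, 2 ≤ k2 → k2 ≤ N → IsCMOn μ x hx 0 k2 k2)) :=
  statement2_general μ N d x hx
end
end

section
/- Let [x_k]_0^N be a Gaussian sequence of R^d-valued random vectors and c ∈ {0,N}. Then [x_k] is CM_c if and only if the R^{2d}-valued sequence y_k = (x_k, x_c), indexed by k ∈ [0,N]\{c} (i.e., k ∈ [0,N−1] if c = N and k ∈ [1,N] if c = 0), is Markov. -/
open MeasureTheory ProbabilityTheory Matrix

noncomputable section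

/-!
The coordinate `x c` is measurable for every conditioning σ-algebra `σ(x j, x c)`, and
information already contained in the conditioning σ-algebra may be adjoined to both sides of a
conditional independence. Hence `(x k, x c)` is conditionally independent of `((x i, x c))_{i<j}`
given `(x j, x c)` exactly when `x k` is conditionally independent of `(x i)_{i<j}`: the Markov
property of `y` on an index interval is the CM_c property on the same interval. The index `c`
left out of the Markov interval is harmless for the same reason: as a past index (`c = 0`) or as
a future index (`c = N`) it only contributes `x c`.
-/

namespace ProbabilityTheory

variable {Ω : Type*} {m' mΩ : MeasurableSpace Ω} [StandardBorelSpace Ω] {hm' : m' ≤ mΩ}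
  {μ : Measure Ω} [IsFiniteMeasure μ]

lemma _root_.IsPiSystem.image2_inter {α : Type*} {C D : Set (Set α)} (hC : IsPiSystem C)
    (hD : IsPiSystem D) : IsPiSystem (Set.image2 (· ∩ ·) C D) := by
  rintro _ ⟨s₁, hs₁, t₁, ht₁, rfl⟩ _ ⟨s₂, hs₂, t₂, ht₂, rfl⟩ hst
  rw [Set.inter_inter_inter_comm] at hst ⊢
  exact Set.mem_image2_of_mem (hC _ hs₁ _ hs₂ (hst.mono Set.inter_subset_left))
    (hD _ ht₁ _ ht₂ (hst.mono Set.inter_subset_right))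

lemma _root_.MeasurableSpace.sup_eq_generateFrom_image2_inter (m₁ m₂ : MeasurableSpace Ω) :
    m₁ ⊔ m₂ = MeasurableSpace.generateFrom
      (Set.image2 (· ∩ ·) {s | MeasurableSet[m₁] s} {s | MeasurableSet[m₂] s}) := by
  refine le_antisymm (sup_le (fun s hs => ?_) (fun s hs => ?_)) ?_
  · exact MeasurableSpace.measurableSet_generateFrom
      ⟨s, hs, Set.univ, MeasurableSet.univ, Set.inter_univ s⟩
  · exact MeasurableSpace.measurableSet_generateFrom
      ⟨Set.univ, MeasurableSet.univ, s, hs, Set.univ_inter s⟩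
  · refine MeasurableSpace.generateFrom_le ?_
    rintro _ ⟨s, hs, t, ht, rfl⟩
    exact (le_sup_left (a := m₁) _ hs).inter (le_sup_right (b := m₂) _ ht)

omit [StandardBorelSpace Ω] in
lemma condExp_inter_ae_eq_indicator {s t : Set Ω} (hs : MeasurableSet[m'] s)
    (ht : MeasurableSet[mΩ] t) : μ⟦s ∩ t | m'⟧ =ᵐ[μ] s.indicator (μ⟦t | m'⟧) := by
  rw [← Set.indicator_indicator]
  exact condExp_indicator ((integrable_const 1).indicator ht) hs

theorem CondIndep.sup_of_le {m₁ m₂ ms : MeasurableSpace Ω} (h : CondIndep m' m₁ m₂ hm' μ)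
    (hm₁ : m₁ ≤ mΩ) (hm₂ : m₂ ≤ mΩ) (hs : ms ≤ m') :
    CondIndep m' (m₁ ⊔ ms) (m₂ ⊔ ms) hm' μ := by
  have hsΩ : ms ≤ mΩ := hs.trans hm'
  have hmeas : ∀ m ≤ mΩ, ∀ u ∈ Set.image2 (· ∩ ·) {s | MeasurableSet[m] s}
      {s | MeasurableSet[ms] s}, MeasurableSet[mΩ] u := by
    rintro m hm _ ⟨A, hA, B, hB, rfl⟩
    exact (hm _ hA).inter (hsΩ _ hB)
  refine CondIndepSets.condIndep (sup_le hm₁ hsΩ) (sup_le hm₂ hsΩ)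
    ((@MeasurableSpace.isPiSystem_measurableSet Ω m₁).image2_inter
      (@MeasurableSpace.isPiSystem_measurableSet Ω ms))
    ((@MeasurableSpace.isPiSystem_measurableSet Ω m₂).image2_inter
      (@MeasurableSpace.isPiSystem_measurableSet Ω ms))
    (MeasurableSpace.sup_eq_generateFrom_image2_inter m₁ ms)
    (MeasurableSpace.sup_eq_generateFrom_image2_inter m₂ ms) ?_
  rw [condIndepSets_iff m' hm' _ _ (hmeas m₁ hm₁) (hmeas m₂ hm₂)]
  rintro _ _ ⟨A₁, hA₁, B₁, hB₁, rfl⟩ ⟨A₂, hA₂, B₂, hB₂, rfl⟩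
  have hA := (condIndep_iff m' m₁ m₂ hm' hm₁ hm₂ μ).mp h A₁ A₂ hA₁ hA₂
  have h₁₂ : μ⟦(B₁ ∩ B₂) ∩ (A₁ ∩ A₂) | m'⟧ =ᵐ[μ] (B₁ ∩ B₂).indicator (μ⟦A₁ ∩ A₂ | m'⟧) :=
    condExp_inter_ae_eq_indicator ((hs _ hB₁).inter (hs _ hB₂))
      ((hm₁ _ hA₁).inter (hm₂ _ hA₂))
  have h₁ : μ⟦B₁ ∩ A₁ | m'⟧ =ᵐ[μ] B₁.indicator (μ⟦A₁ | m'⟧) :=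
    condExp_inter_ae_eq_indicator (hs _ hB₁) (hm₁ _ hA₁)
  have h₂ : μ⟦B₂ ∩ A₂ | m'⟧ =ᵐ[μ] B₂.indicator (μ⟦A₂ | m'⟧) :=
    condExp_inter_ae_eq_indicator (hs _ hB₂) (hm₂ _ hA₂)
  dsimp only
  rw [Set.inter_comm A₁, Set.inter_comm A₂, Set.inter_inter_inter_comm]
  filter_upwards [h₁₂, h₁, h₂, hA] with ω h₁₂ω h₁ω h₂ω hAω
  rw [h₁₂ω, Pi.mul_apply, h₁ω, h₂ω]
  by_cases hω₁ : ω ∈ B₁ <;> by_cases hω₂ : ω ∈ B₂ <;> simp [hω₁, hω₂, hAω]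

theorem CondIndepFun.of_comap_le_sup {β γ β' γ' : Type*} [mβ : MeasurableSpace β]
    [mγ : MeasurableSpace γ] [mβ' : MeasurableSpace β'] [mγ' : MeasurableSpace γ']
    {ms : MeasurableSpace Ω} {f : Ω → β} {g : Ω → γ} {f' : Ω → β'} {g' : Ω → γ'}
    (h : CondIndepFun m' hm' f g μ) (hf : Measurable[mΩ] f) (hg : Measurable[mΩ] g)
    (hs : ms ≤ m') (hf' : mβ'.comap f' ≤ mβ.comap f ⊔ ms)
    (hg' : mγ'.comap g' ≤ mγ.comap g ⊔ ms) :
    CondIndepFun m' hm' f' g' μ := by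
  rw [condIndepFun_iff_condIndep] at h ⊢
  exact condIndep_of_condIndep_of_le_right
    (condIndep_of_condIndep_of_le_left (h.sup_of_le hf.comap_le hg.comap_le hs) hf') hg'

end ProbabilityTheory

lemma MeasurableSpace.comap_pi_le_iff {Ω ι : Type*} {X : ι → Type*}
    [∀ i, MeasurableSpace (X i)] {f : ∀ i, Ω → X i} {M : MeasurableSpace Ω} :
    MeasurableSpace.pi.comap (fun ω i => f i ω) ≤ M
      ↔ ∀ i, MeasurableSpace.comap (f i) inferInstance ≤ M := by
  simp only [MeasurableSpace.pi, MeasurableSpace.comap_iSup, MeasurableSpace.comap_comp,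
    iSup_le_iff]
  rfl

namespace CMSeq

open MeasurableSpace

variable {Ω : Type} [MeasurableSpace Ω] [StandardBorelSpace Ω] {μ : Measure Ω}
  [IsFiniteMeasure μ] {d : ℕ} {x : ℕ → Ω → (Fin d → ℝ)} {hx : ∀ k, Measurable (x k)}

omit [MeasurableSpace Ω] [StandardBorelSpace Ω] in
lemma comap_le_comap_prodMk_right (j c : ℕ) :
    MeasurableSpace.comap (x c) inferInstance
      ≤ MeasurableSpace.comap (fun ω => (x j ω, x c ω)) inferInstance :=
  le_sup_right.trans_eq (comap_prodMk (x j) (x c)).symm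

omit [MeasurableSpace Ω] [StandardBorelSpace Ω] in
lemma comap_le_comap_prodMk_left (j c : ℕ) :
    MeasurableSpace.comap (x j) inferInstance
      ≤ MeasurableSpace.comap (fun ω => (x j ω, x c ω)) inferInstance :=
  le_sup_left.trans_eq (comap_prodMk (x j) (x c)).symm

lemma isMarkovOn_iff_isCMOn (a b c : ℕ) :
    IsMarkovOn μ (fun k ω => (x k ω, x c ω)) (fun k => (hx k).prodMk (hx c)) a b
      ↔ IsCMOn μ x hx a b c := by
  refine forall₄_congr fun j k _ _ => forall_congr' fun _ => ⟨fun h => ?_, fun h => ?_⟩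
  · refine h.of_comap_le_sup ((hx k).prodMk (hx c))
      (measurable_pi_lambda _ fun i => (hx i).prodMk (hx c)) (comap_le_comap_prodMk_right j c)
      (le_sup_of_le_left (comap_le_comap_prodMk_left k c))
      (comap_pi_le_iff.2 fun i => le_sup_of_le_left ?_)
    exact (comap_le_comap_prodMk_left i c).trans
      (comap_le_comap_pi (g := fun (i : Set.Ico a j) ω => (x i ω, x c ω)) i)
  · refine h.of_comap_le_sup (hx k) (measurable_pi_lambda _ fun i => hx i)
      (comap_le_comap_prodMk_right j c) ?_ (comap_pi_le_iff.2 fun i => ?_)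
    · exact (comap_prodMk (x k) (x c)).le
    · exact (comap_prodMk (x i) (x c)).trans_le
        (sup_le_sup_right (comap_le_comap_pi (g := fun (i : Set.Ico a j) => x i) i) _)

theorem IsCMOn.mono {k₁ k₂ a b c : ℕ} (h : IsCMOn μ x hx k₁ k₂ c) (ha : k₁ ≤ a) (hb : b ≤ k₂) :
    IsCMOn μ x hx a b c := by
  intro j k haj hjk hkb
  have hsub : Set.Ico a j ⊆ Set.Ico k₁ j := Set.Ico_subset_Ico_left ha
  exact (h j k (ha.trans haj) hjk (hkb.trans hb)).comp measurable_id
    (measurable_pi_lambda (fun v (i : Set.Ico a j) => v (Set.inclusion hsub i))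
      fun i => measurable_pi_apply _)

theorem IsCMOn.extend_left {k₂ c : ℕ} (h : IsCMOn μ x hx (c + 1) k₂ c) :
    IsCMOn μ x hx c k₂ c := by
  intro j k hcj hjk hk
  rcases eq_or_lt_of_le hcj with rfl | hcj
  · refine condIndepFun_of_measurable_right (hx k)
      (measurable_iff_comap_le.2 (comap_pi_le_iff.2 fun i => ?_))
    exact absurd i.2 (by simp)
  · refine (h j k hcj hjk hk).of_comap_le_sup (hx k) (measurable_pi_lambda _ fun i => hx i)
      (comap_le_comap_prodMk_right j c) le_sup_left (comap_pi_le_iff.2 fun i => ?_)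
    obtain hi | hi := eq_or_ne (i : ℕ) c
    · rw [hi]
      exact le_sup_right
    · refine le_sup_of_le_left (comap_le_comap_pi (g := fun (i : Set.Ico (c + 1) j) => x i)
        ⟨i, Set.mem_Ico.2 ⟨?_, (Set.mem_Ico.1 i.2).2⟩⟩)
      have := (Set.mem_Ico.1 i.2).1
      omega

theorem IsCMOn.extend_right {k₁ k₂ : ℕ} (h : IsCMOn μ x hx k₁ k₂ (k₂ + 1)) :
    IsCMOn μ x hx k₁ (k₂ + 1) (k₂ + 1) := by
  intro j k hj hjk hk
  rcases Nat.lt_or_eq_of_le hk with hk | rfl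
  · exact h j k hj hjk (Nat.le_of_lt_succ hk)
  · exact condIndepFun_of_measurable_left
      (measurable_iff_comap_le.2 (comap_le_comap_prodMk_right j _))
      (measurable_pi_lambda _ fun i => hx i)

end CMSeq

open CMSeq in
theorem statement7_general {Ω : Type} [MeasurableSpace Ω] [StandardBorelSpace Ω]
    (μ : MeasureTheory.Measure Ω) [MeasureTheory.IsProbabilityMeasure μ]
    (N d c : ℕ) (hc : c = 0 ∨ c = N)
    (x : ℕ → Ω → (Fin d → ℝ)) (hx : ∀ k, Measurable (x k)) :
    IsCMOn μ x hx 0 N c ↔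
      IsMarkovOn μ (fun k ω => (x k ω, x c ω)) (fun k => (hx k).prodMk (hx c))
        (if c = 0 then 1 else 0) (if c = 0 then N else N - 1) := by
  by_cases hc0 : c = 0
  · subst hc0
    rw [if_pos rfl, if_pos rfl, isMarkovOn_iff_isCMOn (hx := hx)]
    exact ⟨fun h => h.mono zero_le_one le_rfl, IsCMOn.extend_left⟩
  · obtain rfl : c = N := hc.resolve_left hc0
    obtain ⟨n, rfl⟩ := Nat.exists_eq_succ_of_ne_zero hc0
    rw [if_neg hc0, if_neg hc0, isMarkovOn_iff_isCMOn (hx := hx), Nat.succ_sub_one]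
    exact ⟨fun h => h.mono le_rfl n.le_succ, IsCMOn.extend_right⟩

open CMSeq in
theorem statement7 {Ω : Type} [MeasurableSpace Ω] [StandardBorelSpace Ω]
    (μ : MeasureTheory.Measure Ω) [MeasureTheory.IsProbabilityMeasure μ]
    (N d c : ℕ) (hN : 2 ≤ N) (hd : 1 ≤ d) (hc : c = 0 ∨ c = N)
    (x : ℕ → Ω → (Fin d → ℝ)) (hx : ∀ k, Measurable (x k))
    (hGauss : IsGaussianFam μ (N + 1) d x) :
    IsCMOn μ x hx 0 N c ↔
      IsMarkovOn μ (fun k ω => (x k ω, x c ω)) (fun k => (hx k).prodMk (hx c))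
        (if c = 0 then 1 else 0) (if c = 0 then N else N - 1) :=
  statement7_general μ N d c hc x hx
end
end

section
/- Let [x_k]_0^N be a Gaussian sequence of R^d-valued random vectors. Then the following are equivalent: (1) [x_k] is reciprocal; (2) for every k1 ∈ [0,N−1] the R^{2d}-valued sequence y_k = (x_k, x_{k1}), k ∈ [k1+1,N], is Markov, and the sequence y_k = (x_k, x_N), k ∈ [0,N−1], is Markov; (3) for every k2 ∈ [1,N] the sequence y_k = (x_k, x_{k2}), k ∈ [0,k2−1], is Markov, and the sequence y_k = (x_k, x_0), k ∈ [1,N], is Markov. -/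
open MeasureTheory ProbabilityTheory Matrix

noncomputable section

namespace CMAux

variable {Ω : Type}

section Foundation

variable [mΩ : MeasurableSpace Ω] [StandardBorelSpace Ω]
  {μ : MeasureTheory.Measure Ω} [IsProbabilityMeasure μ]

lemma sup_eq_generateFrom_inter (m₁ m₂ : MeasurableSpace Ω) :
    m₁ ⊔ m₂ = MeasurableSpace.generateFrom
      {s | ∃ t u, MeasurableSet[m₁] t ∧ MeasurableSet[m₂] u ∧ s = t ∩ u} := by
  apply le_antisymm
  · refine sup_le ?_ ?_
    · intro s hs
      exact MeasurableSpace.measurableSet_generateFrom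
        ⟨s, Set.univ, hs, MeasurableSet.univ, (Set.inter_univ s).symm⟩
    · intro s hs
      exact MeasurableSpace.measurableSet_generateFrom
        ⟨Set.univ, s, MeasurableSet.univ, hs, (Set.univ_inter s).symm⟩
  · refine MeasurableSpace.generateFrom_le ?_
    rintro s ⟨t, u, ht, hu, rfl⟩
    exact ((le_sup_left : m₁ ≤ m₁ ⊔ m₂) t ht).inter ((le_sup_right : m₂ ≤ m₁ ⊔ m₂) u hu)

lemma isPiSystem_inter_sets (m₁ m₂ : MeasurableSpace Ω) :
    IsPiSystem {s | ∃ t u, MeasurableSet[m₁] t ∧ MeasurableSet[m₂] u ∧ s = t ∩ u} := by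
  rintro s ⟨t, u, ht, hu, rfl⟩ s' ⟨t', u', ht', hu', rfl⟩ -
  exact ⟨t ∩ t', u ∩ u', ht.inter ht', hu.inter hu', Set.inter_inter_inter_comm t u t' u'⟩

lemma setIntegral_eq_of_generateFrom {m : MeasurableSpace Ω} {S : Set (Set Ω)}
    (hm : m ≤ mΩ) (hgen : m = MeasurableSpace.generateFrom S) (hpi : IsPiSystem S)
    {f g : Ω → ℝ} (hf : Integrable f μ) (hg : Integrable g μ)
    (h_univ : ∫ x, f x ∂μ = ∫ x, g x ∂μ)
    (h : ∀ s ∈ S, ∫ x in s, f x ∂μ = ∫ x in s, g x ∂μ) :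
    ∀ s, MeasurableSet[m] s → ∫ x in s, f x ∂μ = ∫ x in s, g x ∂μ := by
  letI : MeasurableSpace Ω := mΩ
  intro s hs
  have hcompl : ∀ t : Set Ω, MeasurableSet[m] t →
      (∫ x in t, f x ∂μ = ∫ x in t, g x ∂μ) → ∫ x in tᶜ, f x ∂μ = ∫ x in tᶜ, g x ∂μ := by
    intro t htm hteq
    have h1 := integral_add_compl (hm t htm) hf
    have h2 := integral_add_compl (hm t htm) hg
    linarith
  have hunion : ∀ fs : ℕ → Set Ω, Pairwise (Function.onFun Disjoint fs) →
      (∀ i, MeasurableSet[m] (fs i)) → (∀ i, ∫ x in fs i, f x ∂μ = ∫ x in fs i, g x ∂μ) →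
      ∫ x in ⋃ i, fs i, f x ∂μ = ∫ x in ⋃ i, fs i, g x ∂μ := by
    intro fs hdisj hmeas heq
    rw [integral_iUnion (fun i => hm _ (hmeas i)) hdisj hf.integrableOn,
        integral_iUnion (fun i => hm _ (hmeas i)) hdisj hg.integrableOn]
    exact tsum_congr heq
  exact MeasurableSpace.induction_on_inter (m := m)
    (C := fun s _ => ∫ x in s, f x ∂μ = ∫ x in s, g x ∂μ) hgen hpi (by simp) h hcompl hunion s hs

variable {m' m₁ m₂ m₃ m₀ : MeasurableSpace Ω}

lemma condIndep_iff_condexp (hm' : m' ≤ mΩ) (hm₁ : m₁ ≤ mΩ) (hm₂ : m₂ ≤ mΩ) :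
    CondIndep m' m₁ m₂ hm' μ ↔
      ∀ s, MeasurableSet[m₁] s → (μ⟦s | m₂ ⊔ m'⟧) =ᵐ[μ] (μ⟦s | m'⟧) := by
  letI : MeasurableSpace Ω := mΩ
  rw [condIndep_iff m' m₁ m₂ hm' hm₁ hm₂ μ]
  have hm2' : m₂ ⊔ m' ≤ mΩ := sup_le hm₂ hm'
  constructor
  · intro h s hs
    have hindS : Integrable (Set.indicator s fun _ => (1 : ℝ)) μ :=
      (integrable_const 1).indicator (hm₁ s hs)
    refine (ae_eq_condExp_of_forall_setIntegral_eq hm2' hindS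
      (fun t _ _ => integrable_condExp.integrableOn) ?_
      (StronglyMeasurable.aestronglyMeasurable (μ := μ) ((stronglyMeasurable_condExp (m := m') (μ := μ)).mono le_sup_right))).symm
    intro t htm _
    refine setIntegral_eq_of_generateFrom (μ := μ) hm2'
      (sup_eq_generateFrom_inter m₂ m') (isPiSystem_inter_sets m₂ m')
      integrable_condExp hindS (by rw [integral_condExp hm']) ?_ t htm
    rintro w ⟨t, u, ht, hu, rfl⟩
    have htA : MeasurableSet t := hm₂ t ht
    have huA : MeasurableSet u := hm' u hu
    have hIt : Integrable (Set.indicator t fun _ => (1 : ℝ)) μ :=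
      (integrable_const 1).indicator htA
    have hmul : Integrable ((μ⟦s | m'⟧) * (Set.indicator t fun _ => (1 : ℝ))) μ := by
      rw [mul_comm]
      exact integrable_condExp.bdd_mul
        ((stronglyMeasurable_const.indicator htA).aestronglyMeasurable)
        (c := 1) (Filter.Eventually.of_forall fun x => by by_cases hx : x ∈ t <;> simp [hx])
    have e1 : ∫ x in t ∩ u, (μ⟦s | m'⟧) x ∂μ
        = ∫ x in u, ((μ⟦s | m'⟧) * (Set.indicator t fun _ => (1 : ℝ))) x ∂μ := by
      have : ∀ x, ((μ⟦s | m'⟧) * (Set.indicator t fun _ => (1 : ℝ))) x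
          = Set.indicator t (μ⟦s | m'⟧) x := by
        intro x; by_cases hx : x ∈ t <;> simp [hx]
      rw [integral_congr_ae (Filter.Eventually.of_forall fun x => this x),
        setIntegral_indicator htA, Set.inter_comm]
    have e2 : ∫ x in u, ((μ⟦s | m'⟧) * (Set.indicator t fun _ => (1 : ℝ))) x ∂μ
        = ∫ x in u, (μ[(μ⟦s | m'⟧) * (Set.indicator t fun _ => (1 : ℝ)) | m']) x ∂μ :=
      (setIntegral_condExp hm' hmul hu).symm
    have e3 : (μ[(μ⟦s | m'⟧) * (Set.indicator t fun _ => (1 : ℝ)) | m'])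
        =ᵐ[μ] (μ⟦s ∩ t | m'⟧) := by
      refine (condExp_mul_of_stronglyMeasurable_left stronglyMeasurable_condExp hmul hIt).trans ?_
      exact (h s t hs ht).symm
    have e4 : ∫ x in u, (μ[(μ⟦s | m'⟧) * (Set.indicator t fun _ => (1 : ℝ)) | m']) x ∂μ
        = ∫ x in u, (μ⟦s ∩ t | m'⟧) x ∂μ :=
      setIntegral_congr_ae huA (e3.mono fun x hx _ => hx)
    have e5 : ∫ x in u, (μ⟦s ∩ t | m'⟧) x ∂μ
        = ∫ x in u, Set.indicator (s ∩ t) (fun _ => (1 : ℝ)) x ∂μ :=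
      setIntegral_condExp hm' ((integrable_const 1).indicator ((hm₁ s hs).inter htA)) hu
    have e6 : ∫ x in u, Set.indicator (s ∩ t) (fun _ => (1 : ℝ)) x ∂μ
        = ∫ x in t ∩ u, Set.indicator s (fun _ => (1 : ℝ)) x ∂μ := by
      have : ∀ x, Set.indicator (s ∩ t) (fun _ => (1 : ℝ)) x
          = Set.indicator t (Set.indicator s fun _ => (1 : ℝ)) x := by
        intro x
        by_cases hx : x ∈ t <;> by_cases hx' : x ∈ s <;> simp [hx, hx', Set.indicator]
      rw [integral_congr_ae (Filter.Eventually.of_forall fun x => this x),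
        setIntegral_indicator htA, Set.inter_comm]
    rw [e1, e2, e4, e5, e6]
  · intro h s t hs ht
    have hIs : Integrable (Set.indicator s fun _ => (1 : ℝ)) μ :=
      (integrable_const 1).indicator (hm₁ s hs)
    have hIt : Integrable (Set.indicator t fun _ => (1 : ℝ)) μ :=
      (integrable_const 1).indicator (hm₂ t ht)
    have hprod_eq : (Set.indicator (s ∩ t) fun _ => (1 : ℝ))
        = (Set.indicator t fun _ => (1 : ℝ)) * (Set.indicator s fun _ => (1 : ℝ)) := by
      funext x
      by_cases hx : x ∈ t <;> by_cases hx' : x ∈ s <;>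
        simp [hx, hx', Set.indicator]
    have hprodInt : Integrable ((Set.indicator t fun _ => (1 : ℝ))
        * (Set.indicator s fun _ => (1 : ℝ))) μ := by
      rw [← hprod_eq]
      exact (integrable_const 1).indicator ((hm₁ s hs).inter (hm₂ t ht))
    have step2 : (μ⟦s ∩ t | m'⟧)
        =ᵐ[μ] μ[(μ[(Set.indicator t fun _ => (1 : ℝ))
            * (Set.indicator s fun _ => (1 : ℝ)) | m₂ ⊔ m']) | m'] := by
      rw [hprod_eq]
      exact (condExp_condExp_of_le le_sup_right hm2').symm
    have step3 : (μ[(Set.indicator t fun _ => (1 : ℝ))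
          * (Set.indicator s fun _ => (1 : ℝ)) | m₂ ⊔ m'])
        =ᵐ[μ] (Set.indicator t fun _ => (1 : ℝ)) * (μ⟦s | m'⟧) := by
      refine (condExp_mul_of_stronglyMeasurable_left (m := m₂ ⊔ m')
        ((stronglyMeasurable_const.indicator ht).mono le_sup_left) hprodInt hIs).trans ?_
      exact Filter.EventuallyEq.mul (Filter.EventuallyEq.refl _ _) (h s hs)
    have hItc : Integrable ((Set.indicator t fun _ => (1 : ℝ)) * (μ⟦s | m'⟧)) μ :=
      integrable_condExp.bdd_mul
        ((stronglyMeasurable_const.indicator (hm₂ t ht)).aestronglyMeasurable)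
        (c := 1) (Filter.Eventually.of_forall fun x => by by_cases hx : x ∈ t <;> simp [hx])
    have step4 : μ[(μ[(Set.indicator t fun _ => (1 : ℝ))
          * (Set.indicator s fun _ => (1 : ℝ)) | m₂ ⊔ m']) | m']
        =ᵐ[μ] μ[(Set.indicator t fun _ => (1 : ℝ)) * (μ⟦s | m'⟧) | m'] :=
      condExp_congr_ae step3
    have step5 : μ[(Set.indicator t fun _ => (1 : ℝ)) * (μ⟦s | m'⟧) | m']
        =ᵐ[μ] (μ⟦s | m'⟧) * (μ⟦t | m'⟧) := by
      rw [mul_comm]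
      exact condExp_mul_of_stronglyMeasurable_left stronglyMeasurable_condExp
        (by rw [mul_comm]; exact hItc) hIt
    exact (step2.trans (step4.trans step5))


end Foundation

section Graphoid

variable {m' m₁ m₂ m₃ m₀ mA mB a₁ a₂ b₁ b₂ : MeasurableSpace Ω}
  [mΩ : MeasurableSpace Ω] [StandardBorelSpace Ω]
  {μ : MeasureTheory.Measure Ω} [IsProbabilityMeasure μ]

lemma condIndep_congr_all {hA : mA ≤ mΩ} {hB : mB ≤ mΩ}
    (ec : mA = mB) (e1 : a₁ = b₁) (e2 : a₂ = b₂) :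
    CondIndep mA a₁ a₂ hA μ ↔ CondIndep mB b₁ b₂ hB μ := by
  subst ec; subst e1; subst e2; rfl

lemma condIndep_of_eq {hA : mA ≤ mΩ}
    (h : CondIndep mA a₁ a₂ hA μ) (e : mA = mB) (hB : mB ≤ mΩ) :
    CondIndep mB a₁ a₂ hB μ := (condIndep_congr_all e rfl rfl).mp h

lemma condIndep_sup_right_iff (hm' : m' ≤ mΩ) (hm₁ : m₁ ≤ mΩ) (hm₂ : m₂ ≤ mΩ)
    (hm₃ : m₃ ≤ mΩ) :
    CondIndep m' m₁ (m₂ ⊔ m₃) hm' μ ↔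
      (CondIndep m' m₁ m₂ hm' μ ∧ CondIndep (m' ⊔ m₂) m₁ m₃ (sup_le hm' hm₂) μ) := by
  have e1 : (m₂ ⊔ m₃) ⊔ m' = m₃ ⊔ (m' ⊔ m₂) := by
    rw [sup_comm m₂ m₃, sup_assoc, sup_comm m₂ m']
  rw [condIndep_iff_condexp hm' hm₁ (sup_le hm₂ hm₃),
      condIndep_iff_condexp hm' hm₁ hm₂,
      condIndep_iff_condexp (sup_le hm' hm₂) hm₁ hm₃]
  have hsub : m₂ ⊔ m' ≤ (m₂ ⊔ m₃) ⊔ m' :=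
    sup_le ((le_sup_left : m₂ ≤ m₂ ⊔ m₃).trans le_sup_left) le_sup_right
  constructor
  · intro H
    have C1 : ∀ s, MeasurableSet[m₁] s → (μ⟦s | m₂ ⊔ m'⟧) =ᵐ[μ] (μ⟦s | m'⟧) := by
      intro s hs
      have h1 : (μ⟦s | m₂ ⊔ m'⟧) =ᵐ[μ] μ[(μ⟦s | (m₂ ⊔ m₃) ⊔ m'⟧) | m₂ ⊔ m'] :=
        (condExp_condExp_of_le hsub (sup_le (sup_le hm₂ hm₃) hm')).symm
      have h2 : μ[(μ⟦s | (m₂ ⊔ m₃) ⊔ m'⟧) | m₂ ⊔ m']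
          =ᵐ[μ] μ[(μ⟦s | m'⟧) | m₂ ⊔ m'] := condExp_congr_ae (H s hs)
      have h3 : μ[(μ⟦s | m'⟧) | m₂ ⊔ m'] = μ⟦s | m'⟧ :=
        condExp_of_stronglyMeasurable (sup_le hm₂ hm')
          (stronglyMeasurable_condExp.mono le_sup_right) integrable_condExp
      exact (h1.trans h2).trans (by rw [h3])
    refine ⟨C1, ?_⟩
    intro s hs
    have e2 : (μ⟦s | m₃ ⊔ (m' ⊔ m₂)⟧) = (μ⟦s | (m₂ ⊔ m₃) ⊔ m'⟧) := by rw [e1]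
    rw [e2]
    refine (H s hs).trans ?_
    have h4 := (C1 s hs).symm
    have e3 : (μ⟦s | m₂ ⊔ m'⟧) = (μ⟦s | m' ⊔ m₂⟧) := by rw [sup_comm m₂ m']
    rw [e3] at h4
    exact h4
  · rintro ⟨C1, C2⟩ s hs
    have e2 : (μ⟦s | (m₂ ⊔ m₃) ⊔ m'⟧) = (μ⟦s | m₃ ⊔ (m' ⊔ m₂)⟧) := by rw [e1]
    rw [e2]
    refine (C2 s hs).trans ?_
    have e3 : (μ⟦s | m' ⊔ m₂⟧) = (μ⟦s | m₂ ⊔ m'⟧) := by rw [sup_comm m₂ m']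
    rw [e3]
    exact C1 s hs

lemma condIndep_sup_left_of_le (hm' : m' ≤ mΩ) (hm₁ : m₁ ≤ mΩ) (hm₂ : m₂ ≤ mΩ)
    (h : CondIndep m' m₁ m₂ hm' μ) (h0 : m₀ ≤ m') :
    CondIndep m' (m₁ ⊔ m₀) m₂ hm' μ := by
  have hm₀ : m₀ ≤ mΩ := h0.trans hm'
  have e : (m₁ ⊔ m₀) ⊔ m' = m₁ ⊔ m' := by rw [sup_assoc, sup_eq_right.mpr h0]
  have hs := h.symm
  rw [condIndep_iff_condexp hm' hm₂ hm₁] at hs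
  refine CondIndep.symm ?_
  rw [condIndep_iff_condexp hm' hm₂ (sup_le hm₁ hm₀)]
  intro s hsm
  have e2 : (μ⟦s | (m₁ ⊔ m₀) ⊔ m'⟧) = (μ⟦s | m₁ ⊔ m'⟧) := by rw [e]
  rw [e2]
  exact hs s hsm

end Graphoid

section Comap

variable [mΩ : MeasurableSpace Ω]

lemma comap_pi_eq {ι V : Type} [MeasurableSpace V] (f : ι → Ω → V) :
    MeasurableSpace.comap (fun ω (i : ι) => f i ω) MeasurableSpace.pi
      = ⨆ i : ι, MeasurableSpace.comap (f i) inferInstance := by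
  have h : (MeasurableSpace.pi : MeasurableSpace (ι → V))
      = ⨆ i : ι, MeasurableSpace.comap (fun g : ι → V => g i) inferInstance := rfl
  rw [h, MeasurableSpace.comap_iSup]
  exact iSup_congr fun i => MeasurableSpace.comap_comp

lemma comap_prod_eq {V W : Type} [MeasurableSpace V] [MeasurableSpace W]
    (f : Ω → V) (g : Ω → W) :
    MeasurableSpace.comap (fun ω => (f ω, g ω)) inferInstance
      = MeasurableSpace.comap f inferInstance ⊔ MeasurableSpace.comap g inferInstance := by
  have h : (inferInstance : MeasurableSpace (V × W))
      = MeasurableSpace.comap (Prod.fst : V × W → V) inferInstance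
        ⊔ MeasurableSpace.comap (Prod.snd : V × W → W) inferInstance := rfl
  rw [h, MeasurableSpace.comap_sup, MeasurableSpace.comap_comp, MeasurableSpace.comap_comp]
  rfl

end Comap

section CI

variable {d : ℕ} [mΩ : MeasurableSpace Ω] [StandardBorelSpace Ω]

/-- The σ-algebra generated by the variables `x i`, `i ∈ S`. -/
def mm (x : ℕ → Ω → (Fin d → ℝ)) (S : Set ℕ) : MeasurableSpace Ω :=
  ⨆ i ∈ S, MeasurableSpace.comap (x i) inferInstance

lemma mm_le (x : ℕ → Ω → (Fin d → ℝ)) (hx : ∀ k, Measurable (x k)) (S : Set ℕ) :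
    mm x S ≤ mΩ :=
  iSup₂_le fun i _ => (hx i).comap_le

lemma le_mm (x : ℕ → Ω → (Fin d → ℝ)) {S : Set ℕ} {i : ℕ} (hi : i ∈ S) :
    MeasurableSpace.comap (x i) inferInstance ≤ mm x S := by
  exact le_iSup₂ (f := fun i (_ : i ∈ S) => MeasurableSpace.comap (x i) inferInstance) i hi

lemma mm_mono (x : ℕ → Ω → (Fin d → ℝ)) {A B : Set ℕ} (h : A ⊆ B) : mm x A ≤ mm x B :=
  biSup_mono h

lemma mm_union (x : ℕ → Ω → (Fin d → ℝ)) (A B : Set ℕ) :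
    mm x (A ∪ B) = mm x A ⊔ mm x B := iSup_union

lemma mm_empty (x : ℕ → Ω → (Fin d → ℝ)) : mm x (∅ : Set ℕ) = ⊥ := by simp [mm]

lemma mm_singleton (x : ℕ → Ω → (Fin d → ℝ)) (k : ℕ) :
    mm x {k} = MeasurableSpace.comap (x k) inferInstance := by simp [mm]

lemma mm_pair (x : ℕ → Ω → (Fin d → ℝ)) (j l : ℕ) :
    mm x {j, l} = MeasurableSpace.comap (x j) inferInstance
      ⊔ MeasurableSpace.comap (x l) inferInstance := by
  rw [show ({j, l} : Set ℕ) = {j} ∪ {l} from Set.insert_eq j {l}, mm_union,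
    mm_singleton, mm_singleton]

lemma mm_subtype (x : ℕ → Ω → (Fin d → ℝ)) (S : Set ℕ) :
    (⨆ i : S, MeasurableSpace.comap (x i) inferInstance) = mm x S := by
  rw [iSup_subtype]
  rfl

variable {μ : MeasureTheory.Measure Ω} [IsProbabilityMeasure μ]

/-- Conditional independence of families of coordinates. -/
def CI (μ : MeasureTheory.Measure Ω) [IsProbabilityMeasure μ] (x : ℕ → Ω → (Fin d → ℝ))
    (hx : ∀ k, Measurable (x k)) (A B C : Set ℕ) : Prop :=
  CondIndep (mm x C) (mm x A) (mm x B) (mm_le x hx C) μ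

variable {x : ℕ → Ω → (Fin d → ℝ)} {hx : ∀ k, Measurable (x k)} {A B C A' B' D : Set ℕ}

lemma CI.symm (h : CI μ x hx A B C) : CI μ x hx B A C := CondIndep.symm h

lemma CI.mono (h : CI μ x hx A B C) (hA : A' ⊆ A) (hB : B' ⊆ B) : CI μ x hx A' B' C :=
  condIndep_of_condIndep_of_le_right
    (condIndep_of_condIndep_of_le_left h (mm_mono x hA)) (mm_mono x hB)

lemma CI.congr {C' : Set ℕ} (h : CI μ x hx A B C) (eA : A = A') (eB : B = B') (eC : C = C') :
    CI μ x hx A' B' C' := by subst eA; subst eB; subst eC; exact h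

lemma CI.empty : CI μ x hx A ∅ C := by
  unfold CI
  rw [mm_empty]
  exact condIndep_bot_right _

lemma CI.weakUnion (h : CI μ x hx A (B ∪ B') C) : CI μ x hx A B (C ∪ B') := by
  unfold CI at h ⊢
  rw [mm_union, sup_comm (mm x B) (mm x B')] at h
  have h2 := ((condIndep_sup_right_iff (mm_le x hx C) (mm_le x hx A) (mm_le x hx B')
    (mm_le x hx B)).mp h).2
  exact condIndep_of_eq h2 (mm_union x C B').symm (mm_le x hx (C ∪ B'))

lemma CI.contraction (h1 : CI μ x hx A B C) (h2 : CI μ x hx A B' (C ∪ B)) :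
    CI μ x hx A (B ∪ B') C := by
  unfold CI at h1 h2 ⊢
  rw [mm_union]
  refine (condIndep_sup_right_iff (mm_le x hx C) (mm_le x hx A) (mm_le x hx B)
    (mm_le x hx B')).mpr ⟨h1, ?_⟩
  exact condIndep_of_eq h2 (mm_union x C B) (sup_le (mm_le x hx C) (mm_le x hx B))

lemma CI.redundL (h : CI μ x hx A B C) (hD : D ⊆ C) : CI μ x hx (A ∪ D) B C := by
  unfold CI at h ⊢
  rw [mm_union]
  exact condIndep_sup_left_of_le (mm_le x hx C) (mm_le x hx A) (mm_le x hx B) h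
    (mm_mono x hD)

lemma CI.redundR (h : CI μ x hx A B C) (hD : D ⊆ C) : CI μ x hx A (B ∪ D) C :=
  (CI.redundL h.symm hD).symm

end CI

section Combinatorics

variable {d : ℕ} [mΩ : MeasurableSpace Ω] [StandardBorelSpace Ω]
  {μ : MeasureTheory.Measure Ω} [IsProbabilityMeasure μ]
  {x : ℕ → Ω → (Fin d → ℝ)} {hx : ∀ k, Measurable (x k)}

/-- Indices outside the interval `[j, l]` (within `[0, N]`). -/
def OutS (N j l : ℕ) : Set ℕ := {i | i < j ∨ (l < i ∧ i ≤ N)}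

lemma mem_OutS {N j l i : ℕ} : i ∈ OutS N j l ↔ (i < j ∨ (l < i ∧ i ≤ N)) := Iff.rfl

attribute [local simp] mem_OutS

/-- From the reciprocal property, the whole inside of an interval is conditionally
independent of the whole outside given the endpoints. -/
lemma interval_of_recip (N : ℕ)
    (hR : ∀ j k l, j < k → k < l → l ≤ N → CI μ x hx {k} (OutS N j l) {j, l}) :
    ∀ j l, l ≤ N → CI μ x hx (Set.Ioo j l) (OutS N j l) {j, l} := by
  intro j l hl
  have key : ∀ m, j ≤ m → CI μ x hx (OutS N j l) (Set.Ioc j m ∩ Set.Iio l) {j, l} := by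
    intro m hm
    induction m, hm using Nat.le_induction with
    | base =>
      have e : (∅ : Set ℕ) = Set.Ioc j j ∩ Set.Iio l := by
        ext i
        simp only [Set.mem_union, Set.mem_insert_iff, Set.mem_singleton_iff, Set.mem_Ico, Set.mem_Ioc, Set.mem_Ioo, Set.mem_Iio, Set.mem_inter_iff, Set.mem_empty_iff_false, mem_OutS, false_iff, iff_false]
        omega
      exact (CI.empty (A := OutS N j l) (C := {j, l})).congr rfl e rfl
    | succ m hm ih =>
      by_cases hml : m + 1 < l
      · have e1 : OutS N m l = OutS N j l ∪ Set.Ico j m := by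
          ext i
          simp only [Set.mem_union, Set.mem_insert_iff, Set.mem_singleton_iff, Set.mem_Ico, Set.mem_Ioc, Set.mem_Ioo, Set.mem_Iio, Set.mem_inter_iff, Set.mem_empty_iff_false, mem_OutS, false_iff, iff_false]
          omega
        have e2 : ({m, l} : Set ℕ) ∪ Set.Ico j m = {j, l} ∪ (Set.Ioc j m ∩ Set.Iio l) := by
          ext i
          simp only [Set.mem_union, Set.mem_insert_iff, Set.mem_singleton_iff, Set.mem_Ico, Set.mem_Ioc, Set.mem_Ioo, Set.mem_Iio, Set.mem_inter_iff, Set.mem_empty_iff_false, mem_OutS, false_iff, iff_false]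
          omega
        have e3 : (Set.Ioc j m ∩ Set.Iio l) ∪ {m + 1} = Set.Ioc j (m + 1) ∩ Set.Iio l := by
          ext i
          simp only [Set.mem_union, Set.mem_insert_iff, Set.mem_singleton_iff, Set.mem_Ico, Set.mem_Ioc, Set.mem_Ioo, Set.mem_Iio, Set.mem_inter_iff, Set.mem_empty_iff_false, mem_OutS, false_iff, iff_false]
          omega
        have h0 := hR m (m + 1) l (Nat.lt_succ_self m) hml hl
        have h1 : CI μ x hx {m + 1} (OutS N j l ∪ Set.Ico j m) {m, l} := h0.congr rfl e1 rfl
        have step : CI μ x hx {m + 1} (OutS N j l) ({j, l} ∪ (Set.Ioc j m ∩ Set.Iio l)) :=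
          h1.weakUnion.congr rfl rfl e2
        exact (ih.contraction step.symm).congr rfl e3 rfl
      · have e : Set.Ioc j m ∩ Set.Iio l = Set.Ioc j (m + 1) ∩ Set.Iio l := by
          ext i
          simp only [Set.mem_union, Set.mem_insert_iff, Set.mem_singleton_iff, Set.mem_Ico, Set.mem_Ioc, Set.mem_Ioo, Set.mem_Iio, Set.mem_inter_iff, Set.mem_empty_iff_false, mem_OutS, false_iff, iff_false]
          omega
        exact ih.congr rfl e rfl
  by_cases hjl : j < l
  · have e : Set.Ioc j l ∩ Set.Iio l = Set.Ioo j l := by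
      ext i
      simp only [Set.mem_union, Set.mem_insert_iff, Set.mem_singleton_iff, Set.mem_Ico, Set.mem_Ioc, Set.mem_Ioo, Set.mem_Iio, Set.mem_inter_iff, Set.mem_empty_iff_false, mem_OutS, false_iff, iff_false]
      omega
    exact ((key l (le_of_lt hjl)).congr rfl e rfl).symm
  · have e : (∅ : Set ℕ) = Set.Ioo j l := by
      ext i
      simp only [Set.mem_union, Set.mem_insert_iff, Set.mem_singleton_iff, Set.mem_Ico, Set.mem_Ioc, Set.mem_Ioo, Set.mem_Iio, Set.mem_inter_iff, Set.mem_empty_iff_false, mem_OutS, false_iff, iff_false]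
      omega
    exact ((CI.empty (A := OutS N j l) (C := {j, l})).symm).congr e rfl rfl

/-- Construction `L` from the CM property (2b). -/
lemma Lconstruct (N : ℕ) (hN : 1 ≤ N)
    (h2b : ∀ j k, j < k → k ≤ N - 1 → CI μ x hx {k} (Set.Ico 0 j) {j, N}) (j : ℕ) :
    CI μ x hx (Set.Ico 0 j) (Set.Ioo j N) {j, N} := by
  rcases le_or_gt N (j + 1) with hj | hj
  · have e : (∅ : Set ℕ) = Set.Ioo j N := by
      ext i
      simp only [Set.mem_union, Set.mem_insert_iff, Set.mem_singleton_iff, Set.mem_Ico, Set.mem_Ioc, Set.mem_Ioo, Set.mem_Iio, Set.mem_inter_iff, Set.mem_empty_iff_false, mem_OutS, false_iff, iff_false]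
      omega
    exact (CI.empty (A := Set.Ico 0 j) (C := {j, N})).congr rfl e rfl
  · have key : ∀ m, j ≤ m → m ≤ N - 1 → CI μ x hx (Set.Ico 0 j) (Set.Ioc j m) {j, N} := by
      intro m hm
      induction m, hm using Nat.le_induction with
      | base =>
        intro _
        have e : (∅ : Set ℕ) = Set.Ioc j j := by
          ext i
          simp only [Set.mem_union, Set.mem_insert_iff, Set.mem_singleton_iff, Set.mem_Ico, Set.mem_Ioc, Set.mem_Ioo, Set.mem_Iio, Set.mem_inter_iff, Set.mem_empty_iff_false, mem_OutS, false_iff, iff_false]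
          omega
        exact (CI.empty (A := Set.Ico 0 j) (C := {j, N})).congr rfl e rfl
      | succ m hm ih =>
        intro hmN
        have ihm := ih (by omega)
        have e1 : Set.Ico 0 m = Set.Ico 0 j ∪ Set.Ico j m := by
          ext i
          simp only [Set.mem_union, Set.mem_insert_iff, Set.mem_singleton_iff, Set.mem_Ico, Set.mem_Ioc, Set.mem_Ioo, Set.mem_Iio, Set.mem_inter_iff, Set.mem_empty_iff_false, mem_OutS, false_iff, iff_false]
          omega
        have e2 : ({m, N} : Set ℕ) ∪ Set.Ico j m = {j, N} ∪ Set.Ioc j m := by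
          ext i
          simp only [Set.mem_union, Set.mem_insert_iff, Set.mem_singleton_iff, Set.mem_Ico, Set.mem_Ioc, Set.mem_Ioo, Set.mem_Iio, Set.mem_inter_iff, Set.mem_empty_iff_false, mem_OutS, false_iff, iff_false]
          omega
        have e3 : Set.Ioc j m ∪ {m + 1} = Set.Ioc j (m + 1) := by
          ext i
          simp only [Set.mem_union, Set.mem_insert_iff, Set.mem_singleton_iff, Set.mem_Ico, Set.mem_Ioc, Set.mem_Ioo, Set.mem_Iio, Set.mem_inter_iff, Set.mem_empty_iff_false, mem_OutS, false_iff, iff_false]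
          omega
        have h0 := h2b m (m + 1) (Nat.lt_succ_self m) hmN
        have h1 : CI μ x hx {m + 1} (Set.Ico 0 j ∪ Set.Ico j m) {m, N} := h0.congr rfl e1 rfl
        have h2 : CI μ x hx {m + 1} (Set.Ico 0 j) ({j, N} ∪ Set.Ioc j m) :=
          h1.weakUnion.congr rfl rfl e2
        exact (ihm.contraction h2.symm).congr rfl e3 rfl
    have e : Set.Ioc j (N - 1) = Set.Ioo j N := by
      ext i
      simp only [Set.mem_union, Set.mem_insert_iff, Set.mem_singleton_iff, Set.mem_Ico, Set.mem_Ioc, Set.mem_Ioo, Set.mem_Iio, Set.mem_inter_iff, Set.mem_empty_iff_false, mem_OutS, false_iff, iff_false]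
      omega
    exact (key (N - 1) (by omega) le_rfl).congr rfl e rfl

/-- Construction `T` from the CM property (2a). -/
lemma Tconstruct (N : ℕ)
    (h2a : ∀ k1 j k, k1 ≤ N - 1 → k1 + 1 ≤ j → j < k → k ≤ N →
      CI μ x hx {k} (Set.Ico (k1 + 1) j) {j, k1})
    {j l : ℕ} (hjl : j + 2 ≤ l) (hlN : l ≤ N) (hjN : j ≤ N - 1) :
    CI μ x hx (Set.Ioo j l) (Set.Ioc l N) {j, l} := by
  have key : ∀ m, l ≤ m → m ≤ N → CI μ x hx (Set.Ioo j l) (Set.Ioc l m) {j, l} := by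
    intro m hm
    induction m, hm using Nat.le_induction with
    | base =>
      intro _
      have e : (∅ : Set ℕ) = Set.Ioc l l := by
        ext i
        simp only [Set.mem_union, Set.mem_insert_iff, Set.mem_singleton_iff, Set.mem_Ico, Set.mem_Ioc, Set.mem_Ioo, Set.mem_Iio, Set.mem_inter_iff, Set.mem_empty_iff_false, mem_OutS, false_iff, iff_false]
        omega
      exact (CI.empty (A := Set.Ioo j l) (C := {j, l})).congr rfl e rfl
    | succ m hm ih =>
      intro hmN
      have ihm := ih (by omega)
      have e1 : Set.Ico (j + 1) m = Set.Ioo j l ∪ Set.Ico l m := by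
        ext i
        simp only [Set.mem_union, Set.mem_insert_iff, Set.mem_singleton_iff, Set.mem_Ico, Set.mem_Ioc, Set.mem_Ioo, Set.mem_Iio, Set.mem_inter_iff, Set.mem_empty_iff_false, mem_OutS, false_iff, iff_false]
        omega
      have e2 : ({m, j} : Set ℕ) ∪ Set.Ico l m = {j, l} ∪ Set.Ioc l m := by
        ext i
        simp only [Set.mem_union, Set.mem_insert_iff, Set.mem_singleton_iff, Set.mem_Ico, Set.mem_Ioc, Set.mem_Ioo, Set.mem_Iio, Set.mem_inter_iff, Set.mem_empty_iff_false, mem_OutS, false_iff, iff_false]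
        omega
      have e3 : Set.Ioc l m ∪ {m + 1} = Set.Ioc l (m + 1) := by
        ext i
        simp only [Set.mem_union, Set.mem_insert_iff, Set.mem_singleton_iff, Set.mem_Ico, Set.mem_Ioc, Set.mem_Ioo, Set.mem_Iio, Set.mem_inter_iff, Set.mem_empty_iff_false, mem_OutS, false_iff, iff_false]
        omega
      have h0 := h2a j m (m + 1) hjN (by omega) (Nat.lt_succ_self m) hmN
      have h1 : CI μ x hx {m + 1} (Set.Ioo j l ∪ Set.Ico l m) {m, j} := h0.congr rfl e1 rfl
      have h2 : CI μ x hx {m + 1} (Set.Ioo j l) ({j, l} ∪ Set.Ioc l m) :=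
        h1.weakUnion.congr rfl rfl e2
      exact (ihm.contraction h2.symm).congr rfl e3 rfl
  exact key N hlN le_rfl

/-- The CM conditions (2a) and (2b) imply the reciprocal property. -/
lemma recip_of_two (N : ℕ) (hN : 2 ≤ N)
    (h2a : ∀ k1 j k, k1 ≤ N - 1 → k1 + 1 ≤ j → j < k → k ≤ N →
      CI μ x hx {k} (Set.Ico (k1 + 1) j) {j, k1})
    (h2b : ∀ j k, j < k → k ≤ N - 1 → CI μ x hx {k} (Set.Ico 0 j) {j, N}) :
    ∀ j k l, j < k → k < l → l ≤ N → CI μ x hx {k} (OutS N j l) {j, l} := by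
  intro j k l hjk hkl hlN
  have hL := Lconstruct N (by omega) h2b j
  rcases eq_or_lt_of_le hlN with hlN' | hlt
  · have hk : ({k} : Set ℕ) ⊆ Set.Ioo j N :=
      Set.singleton_subset_iff.mpr (by simp only [Set.mem_Ioo]; omega)
    have e : Set.Ico 0 j = OutS N j N := by
      ext i
      simp only [Set.mem_union, Set.mem_insert_iff, Set.mem_singleton_iff, Set.mem_Ico, Set.mem_Ioc, Set.mem_Ioo, Set.mem_Iio, Set.mem_inter_iff, Set.mem_empty_iff_false, mem_OutS, false_iff, iff_false]
      omega
    have := (hL.symm.mono hk le_rfl.subset).congr rfl e rfl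
    rw [hlN']
    exact this
  · have hT := Tconstruct N (j := j) (l := l) h2a (by omega) hlN (by omega)
    have e1 : Set.Ioo j N = Set.Ioo j l ∪ Set.Ico l N := by
      ext i
      simp only [Set.mem_union, Set.mem_insert_iff, Set.mem_singleton_iff, Set.mem_Ico, Set.mem_Ioc, Set.mem_Ioo, Set.mem_Iio, Set.mem_inter_iff, Set.mem_empty_iff_false, mem_OutS, false_iff, iff_false]
      omega
    have e2 : ({j, N} : Set ℕ) ∪ Set.Ico l N = {j, l} ∪ Set.Ioc l N := by
      ext i
      simp only [Set.mem_union, Set.mem_insert_iff, Set.mem_singleton_iff, Set.mem_Ico, Set.mem_Ioc, Set.mem_Ioo, Set.mem_Iio, Set.mem_inter_iff, Set.mem_empty_iff_false, mem_OutS, false_iff, iff_false]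
      omega
    have hW0 : CI μ x hx (Set.Ico 0 j) (Set.Ioo j l ∪ Set.Ico l N) {j, N} :=
      hL.congr rfl e1 rfl
    have hW : CI μ x hx (Set.Ioo j l) (Set.Ico 0 j) ({j, l} ∪ Set.Ioc l N) :=
      (hW0.weakUnion.congr rfl rfl e2).symm
    have hV := hT.contraction hW
    have hk : ({k} : Set ℕ) ⊆ Set.Ioo j l :=
      Set.singleton_subset_iff.mpr (by simp only [Set.mem_Ioo]; omega)
    have e3 : Set.Ioc l N ∪ Set.Ico 0 j = OutS N j l := by
      ext i
      simp only [Set.mem_union, Set.mem_insert_iff, Set.mem_singleton_iff, Set.mem_Ico, Set.mem_Ioc, Set.mem_Ioo, Set.mem_Iio, Set.mem_inter_iff, Set.mem_empty_iff_false, mem_OutS, false_iff, iff_false]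
      omega
    exact (hV.mono hk le_rfl.subset).congr rfl e3 rfl

/-- The CM conditions (3a) and (3b) imply the reciprocal property. -/
lemma recip_of_three (N : ℕ) (hN : 2 ≤ N)
    (h3a : ∀ k2 j k, 1 ≤ k2 → k2 ≤ N → j < k → k ≤ k2 - 1 →
      CI μ x hx {k} (Set.Ico 0 j) {j, k2})
    (h3b : ∀ j k, 1 ≤ j → j < k → k ≤ N → CI μ x hx {k} (Set.Ico 1 j) {j, 0}) :
    ∀ j k l, j < k → k < l → l ≤ N → CI μ x hx {k} (OutS N j l) {j, l} := by
  intro j k l hjk hkl hlN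
  have hl2 : 2 ≤ l := by omega
  have hL' : CI μ x hx (Set.Ioo 0 l) (Set.Ioc l N) {0, l} := by
    have key : ∀ m, l ≤ m → m ≤ N → CI μ x hx (Set.Ioo 0 l) (Set.Ioc l m) {0, l} := by
      intro m hm
      induction m, hm using Nat.le_induction with
      | base =>
        intro _
        have e : (∅ : Set ℕ) = Set.Ioc l l := by
          ext i
          simp only [Set.mem_union, Set.mem_insert_iff, Set.mem_singleton_iff, Set.mem_Ico, Set.mem_Ioc, Set.mem_Ioo, Set.mem_Iio, Set.mem_inter_iff, Set.mem_empty_iff_false, mem_OutS, false_iff, iff_false]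
          omega
        exact (CI.empty (A := Set.Ioo 0 l) (C := {0, l})).congr rfl e rfl
      | succ m hm ih =>
        intro hmN
        have ihm := ih (by omega)
        have e1 : Set.Ico 1 m = Set.Ioo 0 l ∪ Set.Ico l m := by
          ext i
          simp only [Set.mem_union, Set.mem_insert_iff, Set.mem_singleton_iff, Set.mem_Ico, Set.mem_Ioc, Set.mem_Ioo, Set.mem_Iio, Set.mem_inter_iff, Set.mem_empty_iff_false, mem_OutS, false_iff, iff_false]
          omega
        have e2 : ({m, 0} : Set ℕ) ∪ Set.Ico l m = {0, l} ∪ Set.Ioc l m := by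
          ext i
          simp only [Set.mem_union, Set.mem_insert_iff, Set.mem_singleton_iff, Set.mem_Ico, Set.mem_Ioc, Set.mem_Ioo, Set.mem_Iio, Set.mem_inter_iff, Set.mem_empty_iff_false, mem_OutS, false_iff, iff_false]
          omega
        have e3 : Set.Ioc l m ∪ {m + 1} = Set.Ioc l (m + 1) := by
          ext i
          simp only [Set.mem_union, Set.mem_insert_iff, Set.mem_singleton_iff, Set.mem_Ico, Set.mem_Ioc, Set.mem_Ioo, Set.mem_Iio, Set.mem_inter_iff, Set.mem_empty_iff_false, mem_OutS, false_iff, iff_false]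
          omega
        have h0 := h3b m (m + 1) (by omega) (Nat.lt_succ_self m) hmN
        have h1 : CI μ x hx {m + 1} (Set.Ioo 0 l ∪ Set.Ico l m) {m, 0} := h0.congr rfl e1 rfl
        have h2 : CI μ x hx {m + 1} (Set.Ioo 0 l) ({0, l} ∪ Set.Ioc l m) :=
          h1.weakUnion.congr rfl rfl e2
        exact (ihm.contraction h2.symm).congr rfl e3 rfl
    exact key N hlN le_rfl
  have hT2 : CI μ x hx (Set.Ioo j l) (Set.Ioc l N) ({j, l} ∪ Set.Ico 0 j) := by
    have e1 : Set.Ioo 0 l = Set.Ioo j l ∪ Set.Ioc 0 j := by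
      ext i
      simp only [Set.mem_union, Set.mem_insert_iff, Set.mem_singleton_iff, Set.mem_Ico, Set.mem_Ioc, Set.mem_Ioo, Set.mem_Iio, Set.mem_inter_iff, Set.mem_empty_iff_false, mem_OutS, false_iff, iff_false]
      omega
    have e2 : ({0, l} : Set ℕ) ∪ Set.Ioc 0 j = {j, l} ∪ Set.Ico 0 j := by
      ext i
      simp only [Set.mem_union, Set.mem_insert_iff, Set.mem_singleton_iff, Set.mem_Ico, Set.mem_Ioc, Set.mem_Ioo, Set.mem_Iio, Set.mem_inter_iff, Set.mem_empty_iff_false, mem_OutS, false_iff, iff_false]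
      omega
    have h1 : CI μ x hx (Set.Ioc l N) (Set.Ioo j l ∪ Set.Ioc 0 j) {0, l} :=
      hL'.symm.congr rfl e1 rfl
    exact (h1.weakUnion.congr rfl rfl e2).symm
  have hT' : CI μ x hx (Set.Ioo j l) (Set.Ico 0 j) {j, l} := by
    have hS : ∀ r, r < j → CI μ x hx {r} (Set.Ioo j l) ({j, l} ∪ Set.Ico (r + 1) j) := by
      intro r hr
      have key : ∀ m, j ≤ m → m ≤ l - 1 →
          CI μ x hx {r} (Set.Ioc j m) ({j, l} ∪ Set.Ico (r + 1) j) := by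
        intro m hm
        induction m, hm using Nat.le_induction with
        | base =>
          intro _
          have e : (∅ : Set ℕ) = Set.Ioc j j := by
            ext i
            simp only [Set.mem_union, Set.mem_insert_iff, Set.mem_singleton_iff, Set.mem_Ico, Set.mem_Ioc, Set.mem_Ioo, Set.mem_Iio, Set.mem_inter_iff, Set.mem_empty_iff_false, mem_OutS, false_iff, iff_false]
            omega
          exact (CI.empty (A := {r}) (C := {j, l} ∪ Set.Ico (r + 1) j)).congr rfl e rfl
        | succ m hm ih =>
          intro hml
          have ihm := ih (by omega)
          have e1 : Set.Ico 0 m = Set.Ico 0 (r + 1) ∪ Set.Ico (r + 1) m := by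
            ext i
            simp only [Set.mem_union, Set.mem_insert_iff, Set.mem_singleton_iff, Set.mem_Ico, Set.mem_Ioc, Set.mem_Ioo, Set.mem_Iio, Set.mem_inter_iff, Set.mem_empty_iff_false, mem_OutS, false_iff, iff_false]
            omega
          have e2 : ({m, l} : Set ℕ) ∪ Set.Ico (r + 1) m
              = ({j, l} ∪ Set.Ico (r + 1) j) ∪ Set.Ioc j m := by
            ext i
            simp only [Set.mem_union, Set.mem_insert_iff, Set.mem_singleton_iff, Set.mem_Ico, Set.mem_Ioc, Set.mem_Ioo, Set.mem_Iio, Set.mem_inter_iff, Set.mem_empty_iff_false, mem_OutS, false_iff, iff_false]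
            omega
          have e3 : Set.Ioc j m ∪ {m + 1} = Set.Ioc j (m + 1) := by
            ext i
            simp only [Set.mem_union, Set.mem_insert_iff, Set.mem_singleton_iff, Set.mem_Ico, Set.mem_Ioc, Set.mem_Ioo, Set.mem_Iio, Set.mem_inter_iff, Set.mem_empty_iff_false, mem_OutS, false_iff, iff_false]
            omega
          have hrsub : ({r} : Set ℕ) ⊆ Set.Ico 0 (r + 1) :=
            Set.singleton_subset_iff.mpr (by simp only [Set.mem_Ico]; omega)
          have h0 := h3a l m (m + 1) (by omega) hlN (Nat.lt_succ_self m) hml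
          have h1 : CI μ x hx {m + 1} (Set.Ico 0 (r + 1) ∪ Set.Ico (r + 1) m) {m, l} :=
            h0.congr rfl e1 rfl
          have h3 := h1.weakUnion.mono le_rfl.subset hrsub
          have h4 : CI μ x hx {r} {m + 1} (({j, l} ∪ Set.Ico (r + 1) j) ∪ Set.Ioc j m) :=
            h3.symm.congr rfl rfl e2
          exact (ihm.contraction h4).congr rfl e3 rfl
      have e : Set.Ioc j (l - 1) = Set.Ioo j l := by
        ext i
        simp only [Set.mem_union, Set.mem_insert_iff, Set.mem_singleton_iff, Set.mem_Ico, Set.mem_Ioc, Set.mem_Ioo, Set.mem_Iio, Set.mem_inter_iff, Set.mem_empty_iff_false, mem_OutS, false_iff, iff_false]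
        omega
      exact (key (l - 1) (by omega) le_rfl).congr rfl e rfl
    have key2 : ∀ t, CI μ x hx (Set.Ioo j l) (Set.Ico (j - t) j) {j, l} := by
      intro t
      induction t with
      | zero =>
        have e : (∅ : Set ℕ) = Set.Ico (j - 0) j := by
          ext i
          simp only [Set.mem_union, Set.mem_insert_iff, Set.mem_singleton_iff, Set.mem_Ico, Set.mem_Ioc, Set.mem_Ioo, Set.mem_Iio, Set.mem_inter_iff, Set.mem_empty_iff_false, mem_OutS, false_iff, iff_false]
          omega
        exact (CI.empty (A := Set.Ioo j l) (C := {j, l})).congr rfl e rfl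
      | succ t ih =>
        by_cases h0 : j - t = 0
        · have e : Set.Ico (j - t) j = Set.Ico (j - (t + 1)) j := by
            ext i
            simp only [Set.mem_union, Set.mem_insert_iff, Set.mem_singleton_iff, Set.mem_Ico, Set.mem_Ioc, Set.mem_Ioo, Set.mem_Iio, Set.mem_inter_iff, Set.mem_empty_iff_false, mem_OutS, false_iff, iff_false]
            omega
          exact ih.congr rfl e rfl
        · have hr : j - (t + 1) < j := by omega
          have e1 : ({j, l} : Set ℕ) ∪ Set.Ico (j - (t + 1) + 1) j
              = {j, l} ∪ Set.Ico (j - t) j := by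
            ext i
            simp only [Set.mem_union, Set.mem_insert_iff, Set.mem_singleton_iff, Set.mem_Ico, Set.mem_Ioc, Set.mem_Ioo, Set.mem_Iio, Set.mem_inter_iff, Set.mem_empty_iff_false, mem_OutS, false_iff, iff_false]
            omega
          have e2 : Set.Ico (j - t) j ∪ {j - (t + 1)} = Set.Ico (j - (t + 1)) j := by
            ext i
            simp only [Set.mem_union, Set.mem_insert_iff, Set.mem_singleton_iff, Set.mem_Ico, Set.mem_Ioc, Set.mem_Ioo, Set.mem_Iio, Set.mem_inter_iff, Set.mem_empty_iff_false, mem_OutS, false_iff, iff_false]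
            omega
          have hstep' : CI μ x hx (Set.Ioo j l) {j - (t + 1)} ({j, l} ∪ Set.Ico (j - t) j) :=
            ((hS (j - (t + 1)) hr).symm).congr rfl rfl e1
          exact (ih.contraction hstep').congr rfl e2 rfl
    have e : Set.Ico (j - j) j = Set.Ico 0 j := by
      ext i
      simp only [Set.mem_union, Set.mem_insert_iff, Set.mem_singleton_iff, Set.mem_Ico, Set.mem_Ioc, Set.mem_Ioo, Set.mem_Iio, Set.mem_inter_iff, Set.mem_empty_iff_false, mem_OutS, false_iff, iff_false]
      omega
    exact (key2 j).congr rfl e rfl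
  have hV := hT'.contraction hT2
  have hk : ({k} : Set ℕ) ⊆ Set.Ioo j l :=
    Set.singleton_subset_iff.mpr (by simp only [Set.mem_Ioo]; omega)
  have e3 : Set.Ico 0 j ∪ Set.Ioc l N = OutS N j l := by
    ext i
    simp only [Set.mem_union, Set.mem_insert_iff, Set.mem_singleton_iff, Set.mem_Ico, Set.mem_Ioc, Set.mem_Ioo, Set.mem_Iio, Set.mem_inter_iff, Set.mem_empty_iff_false, mem_OutS, false_iff, iff_false]
    omega
  exact (hV.mono hk le_rfl.subset).congr rfl e3 rfl

end Combinatorics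

section Bridge

variable {d : ℕ} [mΩ : MeasurableSpace Ω] [StandardBorelSpace Ω]
  {μ : MeasureTheory.Measure Ω} [IsProbabilityMeasure μ]
  {x : ℕ → Ω → (Fin d → ℝ)} {hx : ∀ k, Measurable (x k)}

lemma comap_pair' (j c : ℕ) :
    MeasurableSpace.comap (fun ω => (x j ω, x c ω)) inferInstance = mm x {j, c} :=
  (comap_prod_eq (x j) (x c)).trans (mm_pair x j c).symm

lemma comap_fam_pair (c a b : ℕ) :
    MeasurableSpace.comap (fun ω (i : Set.Ico a b) => (x (i : ℕ) ω, x c ω))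
        MeasurableSpace.pi
      = ⨆ i : Set.Ico a b, (MeasurableSpace.comap (x (i : ℕ)) inferInstance
          ⊔ MeasurableSpace.comap (x c) inferInstance) :=
  (comap_pi_eq _).trans (iSup_congr fun _ => comap_prod_eq _ _)

lemma isMarkovOn_iff (c a b : ℕ) (hy : ∀ k, Measurable fun ω => (x k ω, x c ω)) :
    CMSeq.IsMarkovOn μ (fun k ω => (x k ω, x c ω)) hy a b ↔
      ∀ j k, a ≤ j → j < k → k ≤ b → CI μ x hx {k} (Set.Ico a j) {j, c} := by
  constructor
  · intro H j k haj hjk hkb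
    have h := H j k haj hjk hkb
    rw [condIndepFun_iff_condIndep] at h
    have h2 := (condIndep_congr_all (hB := mm_le x hx {j, c})
      (comap_pair' (x := x) j c) rfl rfl).mp h
    have le1 : mm x {k} ≤ MeasurableSpace.comap (fun ω => (x k ω, x c ω)) inferInstance := by
      rw [comap_pair' (x := x) k c]
      refine mm_mono x ?_
      intro i hi
      simp only [Set.mem_singleton_iff] at hi
      simp [hi]
    have le2 : mm x (Set.Ico a j)
        ≤ MeasurableSpace.comap (fun ω (i : Set.Ico a j) => (x (i : ℕ) ω, x c ω))
            MeasurableSpace.pi := by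
      refine le_trans (le_of_eq (mm_subtype x (Set.Ico a j)).symm) ?_
      rw [comap_fam_pair (x := x) c a j]
      exact iSup_mono fun i => le_sup_left
    exact condIndep_of_condIndep_of_le_right (condIndep_of_condIndep_of_le_left h2 le1) le2
  · intro H j k haj hjk hkb
    have h1 := ((H j k haj hjk hkb).redundL (D := {c}) (by simp)).redundR (D := {c}) (by simp)
    rw [condIndepFun_iff_condIndep]
    have e1 : mm x ({k} ∪ {c}) = MeasurableSpace.comap
        (fun ω => (x k ω, x c ω)) inferInstance := by
      rw [comap_pair' (x := x) k c, Set.singleton_union]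
    have h2 := (condIndep_congr_all
      (hB := measurable_iff_comap_le.mp (hy j))
      (comap_pair' (x := x) j c).symm e1 rfl).mp h1
    refine condIndep_of_condIndep_of_le_right h2 ?_
    rw [comap_fam_pair (x := x) c a j, mm_union, mm_singleton]
    refine iSup_le fun i => sup_le ?_ le_sup_right
    exact le_trans (le_mm x i.2) le_sup_left

lemma isReciprocal_iff (N : ℕ) :
    CMSeq.IsReciprocal μ N x hx ↔
      ∀ j k l, j < k → k < l → l ≤ N → CI μ x hx {k} (OutS N j l) {j, l} := by
  unfold CMSeq.IsReciprocal
  refine forall_congr' fun j => forall_congr' fun k => forall_congr' fun l => ?_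
  refine imp_congr_right fun hjk => imp_congr_right fun hkl => imp_congr_right fun hlN => ?_
  rw [condIndepFun_iff_condIndep]
  refine condIndep_congr_all (hA := measurable_iff_comap_le.mp ((hx j).prodMk (hx l)))
    (hB := mm_le x hx {j, l}) (comap_pair' (x := x) j l) (mm_singleton x k).symm ?_
  exact (comap_pi_eq fun i : {i : ℕ // i < j ∨ (l < i ∧ i ≤ N)} => x (i : ℕ)).trans
    (mm_subtype x (OutS N j l))

end Bridge

end CMAux

open CMSeq in
theorem statement10 {Ω : Type} [MeasurableSpace Ω] [StandardBorelSpace Ω]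
    (μ : MeasureTheory.Measure Ω) [MeasureTheory.IsProbabilityMeasure μ]
    (N d : ℕ) (hN : 2 ≤ N) (hd : 1 ≤ d)
    (x : ℕ → Ω → (Fin d → ℝ)) (hx : ∀ k, Measurable (x k))
    (hGauss : IsGaussianFam μ (N + 1) d x) :
    (IsReciprocal μ N x hx ↔
      ((∀ k1 : ℕ, k1 ≤ N - 1 →
          IsMarkovOn μ (fun k ω => (x k ω, x k1 ω))
            (fun k => (hx k).prodMk (hx k1)) (k1 + 1) N) ∧
        IsMarkovOn μ (fun k ω => (x k ω, x N ω))
          (fun k => (hx k).prodMk (hx N)) 0 (N - 1))) ∧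
    (IsReciprocal μ N x hx ↔
      ((∀ k2 : ℕ, 1 ≤ k2 → k2 ≤ N →
          IsMarkovOn μ (fun k ω => (x k ω, x k2 ω))
            (fun k => (hx k).prodMk (hx k2)) 0 (k2 - 1)) ∧
        IsMarkovOn μ (fun k ω => (x k ω, x 0 ω))
          (fun k => (hx k).prodMk (hx 0)) 1 N)) := by
  have hRiff := CMAux.isReciprocal_iff (μ := μ) (x := x) (hx := hx) N
  constructor
  · constructor
    · intro hR
      have hInt := CMAux.interval_of_recip N (hRiff.mp hR)
      constructor
      · intro k1 hk1
        rw [CMAux.isMarkovOn_iff (hx := hx) k1 (k1 + 1) N]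
        intro j k haj hjk hkN
        have h := (hInt k1 j (by omega)).symm
        have hk : ({k} : Set ℕ) ⊆ CMAux.OutS N k1 j :=
          Set.singleton_subset_iff.mpr (by simp only [CMAux.mem_OutS]; omega)
        have hsub : Set.Ico (k1 + 1) j ⊆ Set.Ioo k1 j := by
          intro i hi
          simp only [Set.mem_Ico] at hi
          simp only [Set.mem_Ioo]
          omega
        have ec : ({k1, j} : Set ℕ) = {j, k1} := by
          ext i
          simp only [Set.mem_insert_iff, Set.mem_singleton_iff]
          tauto
        exact (h.mono hk hsub).congr rfl rfl ec
      · rw [CMAux.isMarkovOn_iff (hx := hx) N 0 (N - 1)]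
        intro j k haj hjk hkN
        have h := hInt j N le_rfl
        have hk : ({k} : Set ℕ) ⊆ Set.Ioo j N :=
          Set.singleton_subset_iff.mpr (by simp only [Set.mem_Ioo]; omega)
        have hsub : Set.Ico 0 j ⊆ CMAux.OutS N j N := by
          intro i hi
          simp only [Set.mem_Ico] at hi
          simp only [CMAux.mem_OutS]
          omega
        exact h.mono hk hsub
    · rintro ⟨hM1, hM2⟩
      refine hRiff.mpr (CMAux.recip_of_two N hN ?_ ?_)
      · intro k1 j k hk1 haj hjk hkN
        exact (CMAux.isMarkovOn_iff (hx := hx) k1 (k1 + 1) N _).mp (hM1 k1 hk1)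
          j k haj hjk hkN
      · intro j k hjk hkN
        exact (CMAux.isMarkovOn_iff (hx := hx) N 0 (N - 1) _).mp hM2
          j k (Nat.zero_le j) hjk hkN
  · constructor
    · intro hR
      have hInt := CMAux.interval_of_recip N (hRiff.mp hR)
      constructor
      · intro k2 hk2a hk2b
        rw [CMAux.isMarkovOn_iff (hx := hx) k2 0 (k2 - 1)]
        intro j k haj hjk hkb
        have h := hInt j k2 hk2b
        have hk : ({k} : Set ℕ) ⊆ Set.Ioo j k2 :=
          Set.singleton_subset_iff.mpr (by simp only [Set.mem_Ioo]; omega)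
        have hsub : Set.Ico 0 j ⊆ CMAux.OutS N j k2 := by
          intro i hi
          simp only [Set.mem_Ico] at hi
          simp only [CMAux.mem_OutS]
          omega
        exact h.mono hk hsub
      · rw [CMAux.isMarkovOn_iff (hx := hx) 0 1 N]
        intro j k haj hjk hkN
        have h := (hInt 0 j (by omega)).symm
        have hk : ({k} : Set ℕ) ⊆ CMAux.OutS N 0 j :=
          Set.singleton_subset_iff.mpr (by simp only [CMAux.mem_OutS]; omega)
        have hsub : Set.Ico 1 j ⊆ Set.Ioo 0 j := by
          intro i hi
          simp only [Set.mem_Ico] at hi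
          simp only [Set.mem_Ioo]
          omega
        have ec : ({0, j} : Set ℕ) = {j, 0} := by
          ext i
          simp only [Set.mem_insert_iff, Set.mem_singleton_iff]
          tauto
        exact (h.mono hk hsub).congr rfl rfl ec
    · rintro ⟨hM1, hM2⟩
      refine hRiff.mpr (CMAux.recip_of_three N hN ?_ ?_)
      · intro k2 j k h1 h2 hjk hkb
        exact (CMAux.isMarkovOn_iff (hx := hx) k2 0 (k2 - 1) _).mp (hM1 k2 h1 h2)
          j k (Nat.zero_le j) hjk hkb
      · intro j k h1 hjk hkN
        exact (CMAux.isMarkovOn_iff (hx := hx) 0 1 N _).mp hM2 j k h1 hjk hkN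
end
end
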